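/- Let b = 0 or 1 and let G be a graph (connected if b = 1). For classes O̅_S ∈ O̅^b(G−S) and O̅_T ∈ O̅^b(G−T) with S, T ∈ A^b_G, the following two conditions are equivalent when T ⊆ S: (i) there exist representatives O'_S ∈ O̅_S and O'_T ∈ O̅_T with (O'_T)|_{G−S} = O'_S; (ii) for every representative O'_S ∈ O̅_S there exists O'_T ∈ O̅_T with (O'_T)|_{G−S} = O'_S. Declaring O̅_S ≤ O̅_T iff T ⊆ S and (i) holds defines a partial order on O̅P^b_G = ⊔_{S ∈ A^b_G} O̅^b(G−S); the forgetful map O̅P^b_G → A^b_G sending O̅_S to S is a quotient of posets; and the map sending O̅_S to g(G−S) is a rank on O̅P^b_G. -/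

import Mathlib

/-!
Common framework: finite vertex-weighted multigraphs (loops and multiple edges
allowed), generalized orientations, divisors, contractions, and poset gadgets.

A graph is encoded by a finite set `V ⊆ ℕ` of vertices, a finite set `E ⊆ ℕ`
of edges, an "ends" function assigning to each edge its ordered pair of
end-vertices (the two components encode the two half-edges), and a weight
function `w : ℕ → ℕ`.

A generalized orientation is a function `ℕ → Option EdgeDir`, where `none`
means the edge is absent (an orientation on a spanning subgraph `G − S` takes
the value `none` exactly on edges outside `E \ S`), `fwd`/`bwd` give the edge a
single direction, and `bi` makes the edge bioriented.
-/

open scoped Classical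
open Finset

/-- Direction of an edge under a generalized orientation. -/
inductive EdgeDir : Type
  | fwd
  | bwd
  | bi
deriving DecidableEq

/-- Generalized orientation data. -/
abbrev Orient : Type := ℕ → Option EdgeDir

/-- The number of ending (target) half-edges at the vertex `v` of an edge with
end-pair `p`, given its direction `d`.  A one-way oriented edge has exactly
one target end; a bioriented edge has both ends as targets. -/
def dirT : Option EdgeDir → ℕ × ℕ → ℕ → ℕ
  | none, _, _ => 0
  | some EdgeDir.fwd, p, v => if p.2 = v then 1 else 0
  | some EdgeDir.bwd, p, v => if p.1 = v then 1 else 0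
  | some EdgeDir.bi, p, v => (if p.1 = v then 1 else 0) + (if p.2 = v then 1 else 0)

/-- Restriction of orientation data to the set `D` of kept edges. -/
def restr (O : Orient) (D : Finset ℕ) : Orient := fun e => if e ∈ D then O e else none

/-- A finite vertex-weighted multigraph. -/
structure MGraph : Type where
  V : Finset ℕ
  E : Finset ℕ
  ends : ℕ → ℕ × ℕ
  w : ℕ → ℕ
  ends_mem : ∀ e ∈ E, (ends e).1 ∈ V ∧ (ends e).2 ∈ V

namespace MGraph

variable (G : MGraph)

/-- Edge set of the induced subgraph `(G−S)[Z]`: edges of `G − S` with both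
ends in `Z`. -/
def indEdges (S Z : Finset ℕ) : Finset ℕ :=
  (G.E \ S).filter fun e => (G.ends e).1 ∈ Z ∧ (G.ends e).2 ∈ Z

/-- The cut `E(Z, Zᶜ)` in `G − S`: edges of `G − S` with exactly one end in `Z`. -/
def cutEdges (S Z : Finset ℕ) : Finset ℕ :=
  (G.E \ S).filter fun e =>
    ((G.ends e).1 ∈ Z ∧ (G.ends e).2 ∉ Z) ∨ ((G.ends e).1 ∉ Z ∧ (G.ends e).2 ∈ Z)

/-- Adjacency via an edge belonging to `F ∩ E`. -/
def adjOn (F : Finset ℕ) (u v : ℕ) : Prop :=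
  ∃ e ∈ F ∩ G.E, G.ends e = (u, v) ∨ G.ends e = (v, u)

/-- Number of connected components of the subgraph with vertex set `W` and
edge set `F`. -/
noncomputable def ncomp (W F : Finset ℕ) : ℕ :=
  Nat.card (Quot (fun u v : {x : ℕ // x ∈ W} => G.adjOn F u.1 v.1))

/-- The subgraph with vertex set `W` and edge set `F` is connected. -/
def ConnSub (W F : Finset ℕ) : Prop := G.ncomp W F = 1

/-- `G` is connected. -/
def Connected : Prop := G.ConnSub G.V G.E

/-- Genus of the subgraph with vertex set `W` and edge set `F`:
`∑_{v ∈ W} w(v) − |W| + |F| + c`. -/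
noncomputable def subGenus (W F : Finset ℕ) : ℤ :=
  (∑ v ∈ W, (G.w v : ℤ)) - (W.card : ℤ) + (((F ∩ G.E).card : ℤ)) + (G.ncomp W F : ℤ)

/-- The genus of `G`. -/
noncomputable def genus : ℤ := G.subGenus G.V G.E

/-- The degree of a vertex: the number of half-edges having `v` as end. -/
def deg (v : ℕ) : ℕ :=
  ∑ e ∈ G.E, ((if (G.ends e).1 = v then 1 else 0) + (if (G.ends e).2 = v then 1 else 0))

/-- `e` is a bridge of `G − S`: removing it increases the number of connected
components. -/
def IsBridge (S : Finset ℕ) (e : ℕ) : Prop :=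
  e ∈ G.E \ S ∧ G.ncomp G.V (G.E \ S) < G.ncomp G.V (G.E \ insert e S)

/-- The set of bridges of `G − S`. -/
noncomputable def bridges (S : Finset ℕ) : Finset ℕ := (G.E \ S).filter (G.IsBridge S)

/-- `T` is a cut of `G`, i.e. `T = E(Z, Zᶜ)` for some `∅ ⊊ Z ⊊ V`. -/
def IsCut (T : Finset ℕ) : Prop :=
  ∃ Z, Z ⊆ G.V ∧ Z.Nonempty ∧ Z ≠ G.V ∧ T = G.cutEdges ∅ Z

/-- `W` is (the vertex set of) a connected component of `G − S`. -/
def IsCompOf (S W : Finset ℕ) : Prop :=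
  W ⊆ G.V ∧ W.Nonempty ∧ G.ConnSub W (G.indEdges S W) ∧ G.cutEdges S W = ∅

/-- The poset `A^b_G`: for `b = 0` the sets `S ⊆ E` with `G − S` bridgeless,
for `b = 1` the sets `S ⊆ E` with `G − S` connected. -/
def Ab (b : ℕ) (S : Finset ℕ) : Prop :=
  S ⊆ G.E ∧ ((b = 0 ∧ ∀ e, ¬ G.IsBridge S e) ∨ (b = 1 ∧ G.ConnSub G.V (G.E \ S)))

/-- `G` is a stable graph of genus `g`: connected, of genus `g`, and every
vertex of weight `0` has degree at least `3`. -/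
noncomputable def Stable (g : ℕ) : Prop :=
  G.Connected ∧ G.genus = (g : ℤ) ∧ ∀ v ∈ G.V, G.w v = 0 → 3 ≤ G.deg v

/-! ### Generalized orientations on spanning subgraphs -/

/-- `O` is orientation data for the spanning subgraph `G − S` (it is defined
exactly on the edges of `G − S`). -/
def IsOrientOn (S : Finset ℕ) (O : Orient) : Prop :=
  ∀ e, O e ≠ none ↔ e ∈ G.E \ S

/-- The set of bioriented edges of `O`. -/
def biE (O : Orient) : Finset ℕ := G.E.filter fun e => O e = some EdgeDir.bi

/-- `t^O_v`: the number of half-edges having `v` as target. -/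
def tOr (O : Orient) (v : ℕ) : ℕ := ∑ e ∈ G.E, dirT (O e) (G.ends e) v

/-- `t^O(Z)`: the number of edges of `G − S` not contained in `(G−S)[Z]`
having a target in `Z`. -/
def tCut (S : Finset ℕ) (O : Orient) (Z : Finset ℕ) : ℕ :=
  ∑ e ∈ (G.E \ S) \ G.indEdges S Z, ∑ v ∈ Z, dirT (O e) (G.ends e) v

/-- The divisor `d^O` of a `b`-orientation `O` on `G − S`:
`d^O_v = w(v) − 1 + t^O_v` if `G − S` has edges, and `d^O_v = w(v) − 1 + b`
otherwise; it is supported on `V`. -/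
noncomputable def divOr (S : Finset ℕ) (b : ℕ) (O : Orient) : ℕ → ℤ :=
  fun v => if v ∈ G.V then
      (if G.E \ S = ∅ then (G.w v : ℤ) - 1 + (b : ℤ) else (G.w v : ℤ) - 1 + (G.tOr O v : ℤ))
    else 0

/-- Equivalence of generalized orientations on `G − S`:  both are orientations
on `G − S` and they have the same divisor. -/
noncomputable def equivOr (S : Finset ℕ) (b : ℕ) (O O' : Orient) : Prop :=
  G.IsOrientOn S O ∧ G.IsOrientOn S O' ∧ G.divOr S b O = G.divOr S b O'

/-- `O` is a totally cyclic orientation on `G − S`: every nonempty cut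
`E(Z,Zᶜ)` contains an edge with target in `Z` and an edge with target in `Zᶜ`. -/
def TotCyc (S : Finset ℕ) (O : Orient) : Prop :=
  ∀ Z : Finset ℕ, Z ⊆ G.V → Z.Nonempty → Z ≠ G.V → (G.cutEdges S Z).Nonempty →
    (∃ e ∈ G.cutEdges S Z, ∃ v ∈ Z, 0 < dirT (O e) (G.ends e) v) ∧
    (∃ e ∈ G.cutEdges S Z, ∃ v ∈ G.V \ Z, 0 < dirT (O e) (G.ends e) v)

/-- `O` is `e₀`-rooted on `G − S`: for every `Z ⊊ V` with `e₀` an edge of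
`(G−S)[Z]`, the cut `E(Z,Zᶜ)` contains an edge with target in `Zᶜ`. -/
def RootedAt (S : Finset ℕ) (O : Orient) (e₀ : ℕ) : Prop :=
  ∀ Z : Finset ℕ, Z ⊆ G.V → Z ≠ G.V → e₀ ∈ G.indEdges S Z →
    ∃ e ∈ G.cutEdges S Z, ∃ v ∈ G.V \ Z, 0 < dirT (O e) (G.ends e) v

/-- `O` is a rooted `1`-orientation on `G − S`:  it has exactly one bioriented
edge, at which it is rooted.  By convention, if `G − S` consists of a single
vertex (and no edges), the empty orientation is rooted. -/
def Rooted1 (S : Finset ℕ) (O : Orient) : Prop :=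
  (∃ e₀, G.biE O = {e₀} ∧ G.RootedAt S O e₀) ∨ (G.E \ S = ∅ ∧ G.V.card = 1)

/-- `O ∈ 𝒪^b(G−S)`:  for `b = 0`, a totally cyclic orientation on `G − S`;
for `b = 1`, a rooted `1`-orientation on `G − S`. -/
def MemOb (S : Finset ℕ) (b : ℕ) (O : Orient) : Prop :=
  G.IsOrientOn S O ∧
    ((b = 0 ∧ G.biE O = ∅ ∧ G.TotCyc S O) ∨ (b = 1 ∧ G.Rooted1 S O))

/-- `O` is a `b`-orientation on `G − S` (exactly `b` bioriented edges; by
convention the empty orientation on a one-vertex edgeless graph counts as a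
`1`-orientation). -/
def IsbOr (S : Finset ℕ) (b : ℕ) (O : Orient) : Prop :=
  G.IsOrientOn S O ∧
    ((G.biE O).card = b ∨ (G.E \ S = ∅ ∧ G.V.card = 1 ∧ b = 1))

/-! ### Posets of orientations on spanning subgraphs -/

/-- The order of `𝒪𝒫^b_G` on pairs `(S, O_S)`:  `(S,O_S) ≤ (T,O_T)` iff
`T ⊆ S` and the restriction of `O_T` to `G − S` is `O_S`. -/
def leOP (p q : Finset ℕ × Orient) : Prop :=
  q.1 ⊆ p.1 ∧ restr q.2 (G.E \ p.1) = p.2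

/-- The order of `𝒪̄𝒫^b_G` on pairs (representing classes): `(S,O̅_S) ≤ (T,O̅_T)`
iff `T ⊆ S` and some representative of `O̅_T` restricts on `G − S` to some
representative of `O̅_S`. -/
noncomputable def leOPbar (b : ℕ) (p q : Finset ℕ × Orient) : Prop :=
  q.1 ⊆ p.1 ∧ ∃ O', G.equivOr q.1 b O' q.2 ∧
    G.equivOr p.1 b (restr O' (G.E \ p.1)) p.2

/-- Equality in `𝒪̄𝒫^b_G`: same subgraph and equivalent orientations. -/
noncomputable def eqOP (b : ℕ) (p q : Finset ℕ × Orient) : Prop :=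
  p.1 = q.1 ∧ G.equivOr p.1 b p.2 q.2

/-- Membership in `𝒪𝒫^b_G`. -/
def POb (b : ℕ) (p : Finset ℕ × Orient) : Prop :=
  G.Ab b p.1 ∧ G.MemOb p.1 b p.2

/-! ### Stable divisors -/

/-- Stable divisors on `G − S` of degree `g(G−S) − c(G−S) + b` (`b = 0, 1`):
for `b = 1`, `G − S` is connected, the degree is `g(G−S)` and
`|d_Z| > g(Z) − 1` for every `Z ⊆ V`; for `b = 0`, the restriction of `d` to
every connected component `W` of `G − S` has degree `g(W) − 1` and satisfies
`|d_Z| > g(Z) − 1` for every `∅ ≠ Z ⊊ W`. -/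
noncomputable def StableDiv (S : Finset ℕ) (b : ℕ) (d : ℕ → ℤ) : Prop :=
  (∀ v, v ∉ G.V → d v = 0) ∧
  ((b = 1 ∧ G.ConnSub G.V (G.E \ S) ∧
      (∑ v ∈ G.V, d v) = G.subGenus G.V (G.E \ S) ∧
      ∀ Z ⊆ G.V, G.subGenus Z (G.indEdges S Z) - 1 < ∑ v ∈ Z, d v) ∨
   (b = 0 ∧ ∀ W, G.IsCompOf S W →
      (∑ v ∈ W, d v) = G.subGenus W (G.indEdges S W) - 1 ∧
      ∀ Z ⊆ W, Z.Nonempty → Z ≠ W →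
        G.subGenus Z (G.indEdges S Z) - 1 < ∑ v ∈ Z, d v))

/-! ### Contractions -/

/-- The relation identifying the two ends of each edge in `S₀`. -/
def conRel (S₀ : Finset ℕ) (u v : ℕ) : Prop :=
  ∃ e ∈ S₀ ∩ G.E, G.ends e = (u, v) ∨ G.ends e = (v, u)

/-- Representative (the least element) of the class of `v` under the
equivalence generated by identifying the ends of the edges in `S₀`. -/
noncomputable def crep (S₀ : Finset ℕ) (v : ℕ) : ℕ :=
  sInf {u | Relation.EqvGen (G.conRel S₀) u v}

/-- The (weighted) edge contraction `G/S₀`: every connected component of the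
subgraph spanned by `S₀` is contracted to a single vertex, whose weight is the
genus of that component; `E(G/S₀) = E(G) \ S₀`. -/
noncomputable def contract (S₀ : Finset ℕ) : MGraph where
  V := G.V.image (G.crep S₀)
  E := G.E \ S₀
  ends := fun e => (G.crep S₀ (G.ends e).1, G.crep S₀ (G.ends e).2)
  w := fun v =>
    (G.subGenus (G.V.filter fun u => G.crep S₀ u = v)
      (G.indEdges (G.E \ S₀) (G.V.filter fun u => G.crep S₀ u = v))).toNat
  ends_mem := by
    intro e he
    rw [Finset.mem_sdiff] at he
    exact ⟨Finset.mem_image_of_mem _ (G.ends_mem e he.1).1,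
           Finset.mem_image_of_mem _ (G.ends_mem e he.1).2⟩

/-- Deletion of the edges in `T` (a spanning subgraph, as a graph). -/
def ddel (T : Finset ℕ) : MGraph where
  V := G.V
  E := G.E \ T
  ends := G.ends
  w := G.w
  ends_mem := fun e he => G.ends_mem e (Finset.mem_sdiff.mp he).1

/-- Pullback `γ* T` of an edge set along the contraction `γ : G → G/S₀`:
`T ∪ (G−T)_br` for `b = 0`, and `T` for `b = 1`. -/
noncomputable def pullStar (b : ℕ) (T : Finset ℕ) : Finset ℕ :=
  if b = 0 then T ∪ G.bridges T else T

/-- Pushforward of a divisor along the contraction `γ : G → G/S₀`: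
`(γ_* d)_v = ∑_{z ∈ γ⁻¹(v)} d_z`. -/
noncomputable def pushDiv (S₀ : Finset ℕ) (d : ℕ → ℤ) : ℕ → ℤ :=
  fun v => ∑ z ∈ G.V.filter (fun u => G.crep S₀ u = v), d z

/-- The divisor `c^{γ,S}` on `G/S₀`: `c^{γ,S}_v = #{e ∈ S₀ ∩ S : γ(e) = v}`. -/
noncomputable def cGamma (S₀ S : Finset ℕ) : ℕ → ℤ :=
  fun v => ((((S₀ ∩ S) ∩ G.E).filter (fun e => G.crep S₀ (G.ends e).1 = v)).card : ℤ)

/-- The relation "`q` is a value of `γ̄_*` at `p`" for the contraction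
`γ : G → G/S₀` acting on classes of orientations: `q` is the restriction to
`(G/S₀) − γ_* S` of a representative of the class of `p` having no bioriented
edge in `S₀` (when `(G/S₀) − γ_*S` has no edges, any representative serves). -/
noncomputable def pushRel (S₀ : Finset ℕ) (b : ℕ) (p q : Finset ℕ × Orient) : Prop :=
  ∃ O', G.equivOr p.1 b O' p.2 ∧
    ((∀ e ∈ S₀, O' e ≠ some EdgeDir.bi) ∨ G.E \ (S₀ ∪ p.1) = ∅) ∧
    q.1 = p.1 \ S₀ ∧ q.2 = restr O' (G.E \ (S₀ ∪ p.1))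

/-! ### Isomorphisms and directed reachability -/

/-- `(fV, fE)` is an isomorphism from `G` to `H`. -/
def IsoMaps (H : MGraph) (fV fE : ℕ → ℕ) : Prop :=
  Set.BijOn fV ↑G.V ↑H.V ∧ Set.BijOn fE ↑G.E ↑H.E ∧
  (∀ e ∈ G.E, H.ends (fE e) = (fV (G.ends e).1, fV (G.ends e).2) ∨
              H.ends (fE e) = (fV (G.ends e).2, fV (G.ends e).1)) ∧
  (∀ v ∈ G.V, H.w (fV v) = G.w v)

/-- `G` and `H` are isomorphic graphs. -/
def Iso (H : MGraph) : Prop := ∃ fV fE, G.IsoMaps H fV fE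

/-- The edge-contraction relation: `G ≤ H` iff `H = G/S₀` (up to isomorphism)
for some `S₀ ⊆ E(G)`. -/
noncomputable def contractLE (H : MGraph) : Prop :=
  ∃ S₀ ⊆ G.E, (G.contract S₀).Iso H

/-- One step from `u` to `v` along an `O`-directed edge (a bioriented edge may
be traversed in both directions). -/
def dirStep (O : Orient) (u v : ℕ) : Prop :=
  ∃ e ∈ G.E,
    (O e = some EdgeDir.fwd ∧ G.ends e = (u, v)) ∨
    (O e = some EdgeDir.bwd ∧ G.ends e = (v, u)) ∨
    (O e = some EdgeDir.bi ∧ (G.ends e = (u, v) ∨ G.ends e = (v, u)))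

/-- There is an `O`-directed path from the (bioriented) edge `e` to the
vertex `v`: a directed path starting at one of the ends of `e` and ending
at `v`. -/
def dirReachFromEdge (O : Orient) (e v : ℕ) : Prop :=
  ∃ u, ((G.ends e).1 = u ∨ (G.ends e).2 = u) ∧
    Relation.ReflTransGen (G.dirStep O) u v

end MGraph

/-! ### Generic poset gadgets (for sets with an order, modulo an equivalence) -/

/-- `le` is a partial order on `{a | P a}` modulo the identification `eqv`. -/
def IsPartialOrderOnMod {α : Type*} (P : α → Prop) (eqv le : α → α → Prop) : Prop :=
  (∀ a, P a → le a a) ∧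
  (∀ a b c, P a → P b → P c → le a b → le b c → le a c) ∧
  (∀ a b, P a → P b → le a b → le b a → eqv a b)

/-- `le` is a partial order on `{a | P a}`. -/
def IsPartialOrderOn {α : Type*} (P : α → Prop) (le : α → α → Prop) : Prop :=
  IsPartialOrderOnMod P (· = ·) le

/-- `a'` covers `a` in `{a | P a}` ordered by `le`, modulo `eqv`. -/
def CoversOnMod {α : Type*} (P : α → Prop) (eqv le : α → α → Prop) (a a' : α) : Prop :=
  P a ∧ P a' ∧ le a a' ∧ ¬ eqv a a' ∧
    ∀ c, P c → le a c → le c a' → (eqv c a ∨ eqv c a')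

/-- `ρ` is a rank on `{a | P a}` ordered by `le`, modulo `eqv`:  along every
covering relation it increases by exactly `1`. -/
def IsRankOnMod {α : Type*} (P : α → Prop) (eqv le : α → α → Prop) (ρ : α → ℕ) : Prop :=
  ∀ a a', CoversOnMod P eqv le a a' → ρ a' = ρ a + 1

/-- `a'` covers `a` in `{a | P a}` ordered by `le`. -/
def CoversOn {α : Type*} (P : α → Prop) (le : α → α → Prop) : α → α → Prop :=
  CoversOnMod P (· = ·) le

/-- `ρ` is a rank on `{a | P a}` ordered by `le`. -/
def IsRankOn {α : Type*} (P : α → Prop) (le : α → α → Prop) (ρ : α → ℕ) : Prop :=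
  IsRankOnMod P (· = ·) le ρ

/-- `f` is a quotient of posets from `({a | P a}, lea)` onto `({b | Q b}, leb)`:
an order-preserving surjection such that any relation downstairs lifts to a
relation upstairs. -/
def IsPosetQuotient {α β : Type*} (P : α → Prop) (Q : β → Prop)
    (lea : α → α → Prop) (leb : β → β → Prop) (f : α → β) : Prop :=
  (∀ a, P a → Q (f a)) ∧
  (∀ a a', P a → P a' → lea a a' → leb (f a) (f a')) ∧
  (∀ b, Q b → ∃ a, P a ∧ f a = b) ∧
  (∀ b b', Q b → Q b' → leb b b' →
    ∃ a a', P a ∧ P a' ∧ f a = b ∧ f a' = b' ∧ lea a a')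

/-! ### Structures over the moduli of stable graphs -/

/-- Pairs `(G, S)` with `G` stable of genus `g` and `S ∈ A^b_G`. -/
noncomputable def PairStab (g b : ℕ) (p : MGraph × Finset ℕ) : Prop :=
  p.1.Stable g ∧ p.1.Ab b p.2

/-- Isomorphism of pairs `(G, S)`. -/
def PairIso (p q : MGraph × Finset ℕ) : Prop :=
  ∃ fV fE, p.1.IsoMaps q.1 fV fE ∧ p.2.image fE = q.2

/-- The order on `A^b_g`: `(G,S) ≤ (H,T)` iff there is a contraction
`γ : G → H` (a contraction of `G` followed by an isomorphism onto `H`) with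
`γ* T ⊆ S`. -/
noncomputable def AgLE (b : ℕ) (p q : MGraph × Finset ℕ) : Prop :=
  ∃ S₀ ⊆ p.1.E, ∃ fV fE, (p.1.contract S₀).IsoMaps q.1 fV fE ∧
    p.1.pullStar b (((p.1.contract S₀).E).filter fun e => fE e ∈ q.2) ⊆ p.2

/-- Triples `(G, S, O̅_S)` with `G` stable of genus `g`, `S ∈ A^b_G` and
`O_S ∈ 𝒪^b(G−S)` (representing elements of `𝒪̄𝒫^b_g`). -/
noncomputable def TripP (g b : ℕ) (x : MGraph × Finset ℕ × Orient) : Prop :=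
  x.1.Stable g ∧ x.1.Ab b x.2.1 ∧ x.1.MemOb x.2.1 b x.2.2

/-- Identification of triples: an isomorphism of the underlying graphs
carrying the subgraph and the class of the orientation (i.e. its divisor) of
one to the other. -/
noncomputable def TripEq (b : ℕ) (x y : MGraph × Finset ℕ × Orient) : Prop :=
  ∃ fV fE, x.1.IsoMaps y.1 fV fE ∧ x.2.1.image fE = y.2.1 ∧
    ∀ v ∈ x.1.V, y.1.divOr y.2.1 b y.2.2 (fV v) = x.1.divOr x.2.1 b x.2.2 v

/-- The order on `𝒪̄𝒫^b_g`: `(G, O̅_S) ≤ (H, O̅_T)` iff there is a contraction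
`γ : G → H` with `γ* T ⊆ S` and `γ̄_* O̅_S ≤ O̅_T`, the latter meaning that the
restriction of `O̅_T` to `H − γ_* S` equals `γ̄_* O̅_S` (compared through the
isomorphism, via the divisors). -/
noncomputable def OPgLE (b : ℕ) (x y : MGraph × Finset ℕ × Orient) : Prop :=
  ∃ S₀ ⊆ x.1.E, ∃ fV fE, (x.1.contract S₀).IsoMaps y.1 fV fE ∧
    x.1.pullStar b (((x.1.contract S₀).E).filter fun e => fE e ∈ y.2.1) ⊆ x.2.1 ∧
    ∃ O', x.1.equivOr x.2.1 b O' x.2.2 ∧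
      ((∀ e ∈ S₀, O' e ≠ some EdgeDir.bi) ∨ x.1.E \ (S₀ ∪ x.2.1) = ∅) ∧
      ∀ v ∈ (x.1.contract S₀).V,
        y.1.divOr ((x.2.1 \ S₀).image fE) b
            (restr y.2.2 (y.1.E \ (x.2.1 \ S₀).image fE)) (fV v)
          = (x.1.contract S₀).divOr (x.2.1 \ S₀) b
              (restr O' (x.1.E \ (S₀ ∪ x.2.1))) v


/-!
Classes of orientations are determined by in-degrees, which add up over edges. Hence a
representative of the class of `O|_{G−S}` can be glued to `O` on the edges of `S \ T` without
leaving the class of `O`; this gives (i) ⇔ (ii) and transitivity. Total cyclicity and rootedness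
are read off from in-degree sums over vertex sets, so they are class invariants.

The forgetful map is a quotient since orientations extend from `G − S` to `G − T`: for `b = 1`
arbitrarily on the new edges, for `b = 0` by a totally cyclic orientation (Robbins' theorem) of
the bridgeless graph obtained from `G − T` by contracting the components of `G − S`.

For the rank, `g(G−T) − g(G−S) = |S \ T| − c(G−S) + c(G−T)`, which is at least `1` since `G − T`
is bridgeless or connected. Conversely, between `(S, O|_{G−S})` and `(T, O)` lies
`(S \ C, O|_{G−(S \ C)})` for a single edge `C` if `b = 1`, and if `b = 0` for the new edges `C`
of a directed cycle through components of `G − S`, found by leaving each component along an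
edge provided by total cyclicity. Such a `C` joins `|C|` components of `G − S`, and at a cover
`C = S \ T`.
-/

section QuotCard

variable {α : Type*} {r r' : α → α → Prop}

def Quot.coarsen (h : ∀ a b, r a b → Relation.EqvGen r' a b) : Quot r → Quot r' :=
  Quot.lift (Quot.mk r') fun _ _ hab => Quot.eqvGen_sound (h _ _ hab)

theorem Quot.coarsen_surjective (h : ∀ a b, r a b → Relation.EqvGen r' a b) :
    Function.Surjective (Quot.coarsen h) := by
  rintro ⟨a⟩
  exact ⟨Quot.mk r a, rfl⟩

theorem eqvGen_of_eqvGen_add_edge {a b : α}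
    (hstep : ∀ x y, r' x y → r x y ∨ (x = a ∧ y = b) ∨ (x = b ∧ y = a)) {x y : α}
    (hxy : Relation.EqvGen r' x y) :
    Relation.EqvGen r x y ∨ (Relation.EqvGen r x a ∧ Relation.EqvGen r b y) ∨
      (Relation.EqvGen r x b ∧ Relation.EqvGen r a y) := by
  induction hxy with
  | rel x y hxy =>
    rcases hstep x y hxy with h | ⟨rfl, rfl⟩ | ⟨rfl, rfl⟩
    · exact Or.inl (.rel _ _ h)
    · exact Or.inr (Or.inl ⟨.refl _, .refl _⟩)
    · exact Or.inr (Or.inr ⟨.refl _, .refl _⟩)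
  | refl x => exact Or.inl (.refl x)
  | symm x y _ ih =>
    rcases ih with h | ⟨h1, h2⟩ | ⟨h1, h2⟩
    · exact Or.inl h.symm
    · exact Or.inr (Or.inr ⟨h2.symm, h1.symm⟩)
    · exact Or.inr (Or.inl ⟨h2.symm, h1.symm⟩)
  | trans x y z _ _ ih1 ih2 =>
    rcases ih1 with h | ⟨h1, h2⟩ | ⟨h1, h2⟩ <;> rcases ih2 with h' | ⟨h1', h2'⟩ | ⟨h1', h2'⟩
    · exact Or.inl (h.trans _ _ _ h')
    · exact Or.inr (Or.inl ⟨h.trans _ _ _ h1', h2'⟩)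
    · exact Or.inr (Or.inr ⟨h.trans _ _ _ h1', h2'⟩)
    · exact Or.inr (Or.inl ⟨h1, h2.trans _ _ _ h'⟩)
    · exact Or.inr (Or.inl ⟨h1, h2'⟩)
    · exact Or.inl (h1.trans _ _ _ h2')
    · exact Or.inr (Or.inr ⟨h1, h2.trans _ _ _ h'⟩)
    · exact Or.inl (h1.trans _ _ _ h2')
    · exact Or.inr (Or.inr ⟨h1, h2'⟩)

theorem card_quot_eq_of_forall_not (hr : ∀ a b, ¬ r a b) : Nat.card (Quot r) = Nat.card α := by
  refine (Nat.card_eq_of_bijective (Quot.mk r) ⟨fun x y hxy => ?_, Quot.mk_surjective⟩).symm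
  replace hxy := Quot.eqvGen_exact hxy
  induction hxy with
  | rel x y hxy => exact absurd hxy (hr x y)
  | refl => rfl
  | symm _ _ _ ih => exact ih.symm
  | trans _ _ _ _ _ ih1 ih2 => exact ih1.trans ih2

variable [Finite α]

theorem card_quot_le_of_eqvGen (h : ∀ a b, r a b → Relation.EqvGen r' a b) :
    Nat.card (Quot r') ≤ Nat.card (Quot r) :=
  Nat.card_le_card_of_surjective _ (Quot.coarsen_surjective h)

theorem card_quot_lt_of_eqvGen (h : ∀ a b, r a b → Relation.EqvGen r' a b) {a b : α}
    (hr' : Relation.EqvGen r' a b) (hr : ¬ Relation.EqvGen r a b) :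
    Nat.card (Quot r') < Nat.card (Quot r) := by
  refine (card_quot_le_of_eqvGen h).lt_of_ne fun heq => hr (Quot.eqvGen_exact ?_)
  have hbij : Function.Bijective (Quot.coarsen h) :=
    (Nat.bijective_iff_surjective_and_card _).2 ⟨Quot.coarsen_surjective h, heq.symm⟩
  exact hbij.injective (Quot.eqvGen_sound hr')

theorem card_quot_le_add_one {a b : α}
    (hstep : ∀ x y, r' x y → r x y ∨ (x = a ∧ y = b) ∨ (x = b ∧ y = a))
    (h : ∀ x y, r x y → Relation.EqvGen r' x y) :
    Nat.card (Quot r) ≤ Nat.card (Quot r') + 1 := by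
  classical
  have : Fintype (Quot r') := Fintype.ofFinite _
  let g : Quot r → Option (Quot r') := fun q =>
    if q = Quot.mk r b then none else some (Quot.coarsen h q)
  have hg : Function.Injective g := by
    rintro ⟨x⟩ ⟨y⟩ hxy
    by_cases hx : Quot.mk r x = Quot.mk r b <;> by_cases hy : Quot.mk r y = Quot.mk r b <;>
      simp only [g, hx, hy, if_true, if_false, reduceCtorEq, Option.some.injEq] at hxy
    · rw [hx, hy]
    · rcases eqvGen_of_eqvGen_add_edge hstep (Quot.eqvGen_exact hxy) with h' | ⟨_, h'⟩ | ⟨h', _⟩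
      · exact Quot.eqvGen_sound h'
      · exact absurd (Quot.eqvGen_sound h'.symm) hy
      · exact absurd (Quot.eqvGen_sound h') hx
  calc Nat.card (Quot r) ≤ Nat.card (Option (Quot r')) := Nat.card_le_card_of_injective g hg
    _ = Nat.card (Quot r') + 1 := by
      rw [Nat.card_eq_fintype_card, Nat.card_eq_fintype_card, Fintype.card_option]

theorem card_quot_add_card_le (h : ∀ a b, r a b → Relation.EqvGen r' a b) (s : Finset α)
    (hdist : ∀ x ∈ s, ∀ y ∈ s, x ≠ y → ¬ Relation.EqvGen r x y)
    (hmerge : ∀ x ∈ s, ∀ y ∈ s, Relation.EqvGen r' x y) :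
    Nat.card (Quot r') + s.card ≤ Nat.card (Quot r) + 1 := by
  classical
  rcases s.eq_empty_or_nonempty with rfl | ⟨x₀, hx₀⟩
  · simpa using (card_quot_le_of_eqvGen h).trans (Nat.le_succ _)
  have : Fintype (Quot r) := Fintype.ofFinite _
  have : Fintype (Quot r') := Fintype.ofFinite _
  set A := s.image (Quot.mk r)
  have hA : A.card = s.card := Finset.card_image_of_injOn fun x hx y hy hxy => by
    by_contra hne
    exact hdist x hx y hy hne (Quot.eqvGen_exact hxy)
  have hsurj : Set.SurjOn (Quot.coarsen h) ↑(insert (Quot.mk r x₀) (Finset.univ \ A))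
      ↑(Finset.univ : Finset (Quot r')) := by
    intro q _
    obtain ⟨p, rfl⟩ := Quot.coarsen_surjective h q
    by_cases hp : p ∈ A
    · obtain ⟨x, hx, rfl⟩ := Finset.mem_image.1 hp
      exact ⟨Quot.mk r x₀, by simp, Quot.eqvGen_sound (hmerge x₀ hx₀ x hx)⟩
    · exact ⟨p, by simp [hp], rfl⟩
  have hle := Finset.card_le_card_of_surjOn _ hsurj
  have hAle : A.card ≤ Fintype.card (Quot r) := Finset.card_le_univ A
  rw [Finset.card_univ] at hle
  have := Finset.card_insert_le (Quot.mk r x₀) (Finset.univ \ A)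
  rw [Finset.card_univ_sdiff] at this
  rw [Nat.card_eq_fintype_card, Nat.card_eq_fintype_card]
  omega

end QuotCard

theorem exists_true_false_of_cyclic {u : ℕ → Prop} {n : ℕ} (hcyc : u n ↔ u 0)
    (hm : ∃ m < n, ¬ (u m ↔ u (m + 1))) : ∃ l < n, u l ∧ ¬ u (l + 1) := by
  by_contra! H
  have hprop : ∀ a b, a ≤ b → b ≤ n → u a → u b := fun a b hab hbn ha => by
    induction b, hab using Nat.le_induction with
    | base => exact ha
    | succ b _ ih => exact H b (by omega) (ih (by omega))
  obtain ⟨m, hmn, hm⟩ := hm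
  have hm1 : u (m + 1) := by
    by_contra h
    exact hm ⟨fun h' => absurd (H m hmn h') h, fun h' => absurd h' h⟩
  exact hm ⟨fun _ => hm1, fun _ => hprop 0 m (Nat.zero_le _) hmn.le
    (hcyc.1 (hprop (m + 1) n hmn le_rfl hm1))⟩

theorem exists_switches_of_cyclic {u : ℕ → Prop} {n : ℕ} (hcyc : u n ↔ u 0)
    (hm : ∃ m < n, ¬ (u m ↔ u (m + 1))) :
    (∃ l < n, u l ∧ ¬ u (l + 1)) ∧ ∃ l < n, ¬ u l ∧ u (l + 1) := by
  refine ⟨exists_true_false_of_cyclic hcyc hm, ?_⟩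
  obtain ⟨l, hl, h1, h2⟩ := exists_true_false_of_cyclic (u := fun k => ¬ u k) (not_congr hcyc)
    (hm.imp fun _ ⟨hmn, h⟩ => ⟨hmn, fun h' => h (not_iff_not.1 h')⟩)
  exact ⟨l, hl, h1, not_not.1 h2⟩

theorem exists_first_return {α : Type*} {φ : ℕ → α} {s : Finset α} (hφ : ∀ k, φ k ∈ s) :
    ∃ i n, 0 < n ∧ φ (i + n) = φ i ∧ ∀ m < n, ∀ m' < n, φ (i + m) = φ (i + m') → m = m' := by
  classical
  have hex : ∃ j, ∃ i < j, φ i = φ j := by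
    obtain ⟨x, -, y, -, hxy, h⟩ := Finset.exists_ne_map_eq_of_card_lt_of_maps_to
      (s := Finset.range (s.card + 1)) (t := s) (by simp) fun k _ => hφ k
    rcases lt_or_gt_of_ne hxy with h' | h'
    · exact ⟨y, x, h', h⟩
    · exact ⟨x, y, h', h.symm⟩
  obtain ⟨i, hij, hφi⟩ := Nat.find_spec hex
  refine ⟨i, Nat.find hex - i, by omega, by rw [Nat.add_sub_cancel' hij.le]; exact hφi.symm,
    fun m hm m' hm' h => ?_⟩
  by_contra hne
  rcases lt_or_gt_of_ne hne with hlt | hlt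
  · exact Nat.find_min hex (show i + m' < Nat.find hex by omega) ⟨i + m, by omega, h⟩
  · exact Nat.find_min hex (show i + m < Nat.find hex by omega) ⟨i + m', by omega, h.symm⟩

def Separates (Z : Set ℕ) (p : ℕ × ℕ) : Prop := (p.1 ∈ Z ∧ p.2 ∉ Z) ∨ (p.1 ∉ Z ∧ p.2 ∈ Z)

theorem separates_iff {Z : Set ℕ} {p : ℕ × ℕ} : Separates Z p ↔ ¬ (p.1 ∈ Z ↔ p.2 ∈ Z) := by
  unfold Separates; tauto

namespace Robbins

variable (τ : ℕ → ℕ × ℕ)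

/-- `ε e = true` orients `e` from `(τ e).1` to `(τ e).2`. -/
def head (ε : ℕ → Bool) (e : ℕ) : ℕ := if ε e then (τ e).2 else (τ e).1

def tail (ε : ℕ → Bool) (e : ℕ) : ℕ := if ε e then (τ e).1 else (τ e).2

/-- Leaving `Z` is entering `Zᶜ`, so entering every separated set is total cyclicity. -/
def TotallyCyclic (F : Finset ℕ) (ε : ℕ → Bool) : Prop :=
  ∀ Z : Set ℕ, (∃ e ∈ F, Separates Z (τ e)) → ∃ e ∈ F, head τ ε e ∈ Z ∧ tail τ ε e ∉ Z

def Bridgeless (F : Finset ℕ) : Prop :=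
  ∀ e ∈ F, ∀ Z : Set ℕ, Separates Z (τ e) → ∃ f ∈ F, f ≠ e ∧ Separates Z (τ f)

variable {τ}

theorem separates_iff_head_tail {Z : Set ℕ} {ε : ℕ → Bool} {e : ℕ} :
    Separates Z (τ e) ↔ ¬ (head τ ε e ∈ Z ↔ tail τ ε e ∈ Z) := by
  unfold Separates head tail
  cases ε e <;> simp only [Bool.false_eq_true, if_true, if_false] <;> tauto

def glue (τ : ℕ → ℕ × ℕ) (e₀ x : ℕ) : ℕ := if x = (τ e₀).2 then (τ e₀).1 else x

def contract (τ : ℕ → ℕ × ℕ) (e₀ e : ℕ) : ℕ × ℕ := (glue τ e₀ (τ e).1, glue τ e₀ (τ e).2)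

theorem glue_mem_iff {e₀ : ℕ} {Z : Set ℕ} (hZ : (τ e₀).1 ∈ Z ↔ (τ e₀).2 ∈ Z) (x : ℕ) :
    glue τ e₀ x ∈ Z ↔ x ∈ Z := by
  unfold glue
  split_ifs with h
  · rw [h, hZ]
  · rfl

theorem glue_saturated (e₀ : ℕ) (Z : Set ℕ) :
    (τ e₀).1 ∈ glue τ e₀ ⁻¹' Z ↔ (τ e₀).2 ∈ glue τ e₀ ⁻¹' Z := by
  by_cases h : (τ e₀).1 = (τ e₀).2 <;> simp [glue, h]

theorem head_contract (e₀ : ℕ) (ε : ℕ → Bool) (e : ℕ) :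
    head (contract τ e₀) ε e = glue τ e₀ (head τ ε e) := by
  unfold head contract
  split_ifs <;> rfl

theorem tail_contract (e₀ : ℕ) (ε : ℕ → Bool) (e : ℕ) :
    tail (contract τ e₀) ε e = glue τ e₀ (tail τ ε e) := by
  unfold tail contract
  split_ifs <;> rfl

theorem separates_contract_iff {e₀ : ℕ} {Z : Set ℕ} (hZ : (τ e₀).1 ∈ Z ↔ (τ e₀).2 ∈ Z)
    (e : ℕ) : Separates Z (contract τ e₀ e) ↔ Separates Z (τ e) := by
  simp only [Separates, contract, glue_mem_iff hZ]

theorem Bridgeless.contract {F : Finset ℕ} (hF : Bridgeless τ F) (e₀ : ℕ) :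
    Bridgeless (contract τ e₀) (F.erase e₀) := by
  intro f hf Z hsep
  obtain ⟨g, hg, hgf, hgsep⟩ := hF f (Finset.mem_of_mem_erase hf) (glue τ e₀ ⁻¹' Z) hsep
  refine ⟨g, Finset.mem_erase.2 ⟨fun h => ?_, hg⟩, hgf, hgsep⟩
  subst h
  exact separates_iff.1 hgsep (glue_saturated g Z)

theorem TotallyCyclic.enters_of_saturated {F : Finset ℕ} {e₀ : ℕ} {ε : ℕ → Bool}
    (h : TotallyCyclic (contract τ e₀) (F.erase e₀) ε) {Z : Set ℕ}
    (hZ : (τ e₀).1 ∈ Z ↔ (τ e₀).2 ∈ Z) (hsep : ∃ e ∈ F, Separates Z (τ e)) :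
    ∃ e ∈ F.erase e₀, head τ ε e ∈ Z ∧ tail τ ε e ∉ Z := by
  obtain ⟨e, he, hsep⟩ := hsep
  have he₀ : e ≠ e₀ := fun h => separates_iff.1 (h ▸ hsep) hZ
  obtain ⟨f, hf, hhead, htail⟩ := h Z
    ⟨e, Finset.mem_erase.2 ⟨he₀, he⟩, (separates_contract_iff hZ e).2 hsep⟩
  rw [head_contract, glue_mem_iff hZ] at hhead
  rw [tail_contract, glue_mem_iff hZ] at htail
  exact ⟨f, hf, hhead, htail⟩

/-- Uncrossing: the ends of `e₀` cannot both be cut off, each by a set entered by no other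
edge, since then the union and intersection of the two sets would be separated by no edge,
leaving `e₀` as the only edge leaving the first set. -/
theorem not_noEntry_both {F : Finset ℕ} (hF : Bridgeless τ F) {e₀ : ℕ} (he₀ : e₀ ∈ F)
    {ε : ℕ → Bool} (h : TotallyCyclic (contract τ e₀) (F.erase e₀) ε) {Z Z' : Set ℕ}
    (hZ : (τ e₀).1 ∈ Z ∧ (τ e₀).2 ∉ Z) (hZ' : (τ e₀).2 ∈ Z' ∧ (τ e₀).1 ∉ Z')
    (hno : ∀ f ∈ F.erase e₀, head τ ε f ∈ Z → tail τ ε f ∈ Z)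
    (hno' : ∀ f ∈ F.erase e₀, head τ ε f ∈ Z' → tail τ ε f ∈ Z') : False := by
  have hinter : ∀ f ∈ F, ¬ Separates (Z ∩ Z') (τ f) := fun f hf hsep => by
    obtain ⟨g, hg, hhead, htail⟩ := h.enters_of_saturated (Z := Z ∩ Z')
      (by simp only [Set.mem_inter_iff]; tauto) ⟨f, hf, hsep⟩
    simp only [Set.mem_inter_iff, not_and_or] at hhead htail
    rcases htail with htail | htail
    · exact htail (hno g hg hhead.1)
    · exact htail (hno' g hg hhead.2)
  have hunion : ∀ f ∈ F, ¬ Separates (Z ∪ Z') (τ f) := fun f hf hsep => by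
    obtain ⟨g, hg, hhead, htail⟩ := h.enters_of_saturated (Z := Z ∪ Z')
      (by simp only [Set.mem_union]; tauto) ⟨f, hf, hsep⟩
    simp only [Set.mem_union, not_or] at hhead htail
    rcases hhead with hhead | hhead
    · exact htail.1 (hno g hg hhead)
    · exact htail.2 (hno' g hg hhead)
  obtain ⟨f, hf, hfe₀, hsep⟩ := hF e₀ he₀ Z (Or.inl hZ)
  have hf' : f ∈ F.erase e₀ := Finset.mem_erase.2 ⟨hfe₀, hf⟩
  have h1 := separates_iff_head_tail (ε := ε).1 hsep
  have h2 := (separates_iff_head_tail (ε := ε)).not.1 (hinter f hf)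
  have h3 := (separates_iff_head_tail (ε := ε)).not.1 (hunion f hf)
  have h4 := hno f hf'
  have h5 := hno' f hf'
  simp only [Set.mem_inter_iff, Set.mem_union] at h2 h3
  tauto

theorem totallyCyclic_update {F : Finset ℕ} {e₀ : ℕ} (he₀ : e₀ ∈ F) {ε : ℕ → Bool}
    (h : TotallyCyclic (contract τ e₀) (F.erase e₀) ε) (β : Bool)
    (hβ : ∀ Z : Set ℕ, tail τ (Function.update ε e₀ β) e₀ ∈ Z →
      head τ (Function.update ε e₀ β) e₀ ∉ Z →
      ∃ f ∈ F.erase e₀, head τ ε f ∈ Z ∧ tail τ ε f ∉ Z) :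
    TotallyCyclic τ F (Function.update ε e₀ β) := by
  have hne : ∀ f ∈ F.erase e₀, head τ (Function.update ε e₀ β) f = head τ ε f ∧
      tail τ (Function.update ε e₀ β) f = tail τ ε f := fun f hf => by
    simp [head, tail, Function.update_of_ne (Finset.mem_erase.1 hf).1]
  intro Z hsep
  by_cases hZ : (τ e₀).1 ∈ Z ↔ (τ e₀).2 ∈ Z
  · obtain ⟨f, hf, hfZ⟩ := h.enters_of_saturated hZ hsep
    exact ⟨f, Finset.mem_of_mem_erase hf, by rwa [(hne f hf).1, (hne f hf).2]⟩
  have hZ := (separates_iff_head_tail (ε := Function.update ε e₀ β)).1 (separates_iff.2 hZ)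
  by_cases hhead : head τ (Function.update ε e₀ β) e₀ ∈ Z
  · exact ⟨e₀, he₀, hhead, by tauto⟩
  · obtain ⟨f, hf, hfZ⟩ := hβ Z (by tauto) hhead
    exact ⟨f, Finset.mem_of_mem_erase hf, by rwa [(hne f hf).1, (hne f hf).2]⟩

/-- Robbins' theorem: contract an edge `e₀`, orient the rest by induction, and orient `e₀` in
the direction left open by `not_noEntry_both`. -/
theorem exists_totallyCyclic {F : Finset ℕ} :
    ∀ {τ : ℕ → ℕ × ℕ}, Bridgeless τ F → ∃ ε, TotallyCyclic τ F ε := by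
  induction F using Finset.strongInduction with
  | H F ih =>
  intro τ hF
  rcases F.eq_empty_or_nonempty with rfl | ⟨e₀, he₀⟩
  · exact ⟨fun _ => true, fun Z ⟨e, he, _⟩ => absurd he (Finset.notMem_empty e)⟩
  obtain ⟨ε, hε⟩ := ih (F.erase e₀) (Finset.erase_ssubset he₀) (hF.contract e₀)
  by_cases hA : ∀ Z : Set ℕ, (τ e₀).1 ∈ Z → (τ e₀).2 ∉ Z →
      ∃ f ∈ F.erase e₀, head τ ε f ∈ Z ∧ tail τ ε f ∉ Z
  · exact ⟨_, totallyCyclic_update he₀ hε true (by simpa [head, tail] using hA)⟩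
  push Not at hA
  obtain ⟨Z₀, ha₀, hb₀, hno₀⟩ := hA
  refine ⟨_, totallyCyclic_update he₀ hε false fun Z hb ha => ?_⟩
  simp only [tail, head, Function.update_self, Bool.false_eq_true, if_false] at hb ha
  by_contra hno
  push Not at hno
  exact not_noEntry_both hF he₀ hε ⟨ha₀, hb₀⟩ ⟨hb, ha⟩ hno₀ hno

end Robbins

def Orient.ofBool (ε : ℕ → Bool) : Orient := fun e =>
  some (if ε e then EdgeDir.fwd else EdgeDir.bwd)

theorem Orient.ofBool_ne_none (ε : ℕ → Bool) (e : ℕ) : Orient.ofBool ε e ≠ none := by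
  simp [Orient.ofBool]

theorem Orient.ofBool_ne_bi (ε : ℕ → Bool) (e : ℕ) : Orient.ofBool ε e ≠ some EdgeDir.bi := by
  unfold Orient.ofBool
  split_ifs <;> simp

theorem dirT_ofBool_pos_iff {τ : ℕ → ℕ × ℕ} {ε : ℕ → Bool} {e v : ℕ} :
    0 < dirT (Orient.ofBool ε e) (τ e) v ↔ v = Robbins.head τ ε e := by
  unfold Orient.ofBool Robbins.head
  cases ε e <;> simp [dirT, eq_comm, apply_ite]

theorem sum_dirT_of_mem {o : Option EdgeDir} (ho : o ≠ none) {p : ℕ × ℕ} {W : Finset ℕ}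
    (h1 : p.1 ∈ W) (h2 : p.2 ∈ W) :
    ∑ v ∈ W, dirT o p v = 1 + if o = some EdgeDir.bi then 1 else 0 := by
  rcases o with _ | _ | _ | _ <;> simp_all [dirT, Finset.sum_add_distrib, Finset.sum_ite_eq]

theorem sum_dirT_of_notMem (o : Option EdgeDir) {p : ℕ × ℕ} {W : Finset ℕ}
    (h1 : p.1 ∉ W) (h2 : p.2 ∉ W) : ∑ v ∈ W, dirT o p v = 0 := by
  rcases o with _ | _ | _ | _ <;> simp_all [dirT, Finset.sum_add_distrib, Finset.sum_ite_eq]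

theorem eq_of_dirT_pos {o : Option EdgeDir} (ho : o ≠ some EdgeDir.bi) {p : ℕ × ℕ} {v w : ℕ}
    (hv : 0 < dirT o p v) (hw : 0 < dirT o p w) : v = w := by
  rcases o with _ | _ | _ | _ <;> simp only [dirT, Nat.lt_irrefl] at hv hw <;>
    split_ifs at hv hw <;> simp_all

theorem restr_apply_of_mem {O : Orient} {D : Finset ℕ} {e : ℕ} (h : e ∈ D) : restr O D e = O e :=
  if_pos h

theorem restr_apply_of_notMem {O : Orient} {D : Finset ℕ} {e : ℕ} (h : e ∉ D) :
    restr O D e = none :=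
  if_neg h

theorem restr_restr {O : Orient} {D D' : Finset ℕ} (h : D' ⊆ D) :
    restr (restr O D) D' = restr O D' := by
  funext e
  by_cases he : e ∈ D'
  · rw [restr_apply_of_mem he, restr_apply_of_mem he, restr_apply_of_mem (h he)]
  · rw [restr_apply_of_notMem he, restr_apply_of_notMem he]

namespace MGraph

variable {G : MGraph}

/-! ### Connected components of spanning subgraphs -/

theorem mem_cutEdges {S Z : Finset ℕ} {e : ℕ} :
    e ∈ G.cutEdges S Z ↔ e ∈ G.E \ S ∧ Separates ↑Z (G.ends e) :=
  Finset.mem_filter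

theorem mem_indEdges {S Z : Finset ℕ} {e : ℕ} :
    e ∈ G.indEdges S Z ↔ e ∈ G.E \ S ∧ (G.ends e).1 ∈ Z ∧ (G.ends e).2 ∈ Z :=
  Finset.mem_filter

theorem adjOn_symm {F : Finset ℕ} {u v : ℕ} (h : G.adjOn F u v) : G.adjOn F v u :=
  let ⟨e, he, hends⟩ := h; ⟨e, he, hends.symm⟩

theorem adjOn_mono {F F' : Finset ℕ} (hFF : F ⊆ F') {u v : ℕ} (h : G.adjOn F u v) :
    G.adjOn F' u v :=
  let ⟨e, he, hends⟩ := h; ⟨e, Finset.inter_subset_inter_right hFF he, hends⟩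

theorem adjOn_ends {F : Finset ℕ} {e : ℕ} (heF : e ∈ F) (heE : e ∈ G.E) :
    G.adjOn F (G.ends e).1 (G.ends e).2 :=
  ⟨e, Finset.mem_inter.2 ⟨heF, heE⟩, Or.inl rfl⟩

theorem mem_V_of_adjOn {F : Finset ℕ} {u v : ℕ} (h : G.adjOn F u v) : u ∈ G.V ∧ v ∈ G.V := by
  obtain ⟨e, he, hends | hends⟩ := h <;>
  · have := G.ends_mem e (Finset.mem_inter.1 he).2
    rw [hends] at this
    tauto

/-- Off `V`, `EqvGen (adjOn F)` only relates a vertex to itself. -/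
theorem eqvGen_subtype_iff {F : Finset ℕ} (u v : {x // x ∈ G.V}) :
    Relation.EqvGen (fun a b : {x // x ∈ G.V} => G.adjOn F a b) u v ↔
      Relation.EqvGen (G.adjOn F) u v := by
  constructor
  · intro h
    induction h with
    | rel x y h => exact .rel _ _ h
    | refl x => exact .refl _
    | symm x y _ ih => exact ih.symm
    | trans x y z _ _ ih1 ih2 => exact ih1.trans _ _ _ ih2
  · suffices ∀ x y, Relation.EqvGen (G.adjOn F) x y → x ∈ G.V ∨ y ∈ G.V →
        ∃ (hx : x ∈ G.V) (hy : y ∈ G.V),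
          Relation.EqvGen (fun a b : {x // x ∈ G.V} => G.adjOn F a b) ⟨x, hx⟩ ⟨y, hy⟩ from
      fun h => (this u v h (Or.inl u.2)).2.2
    intro x y h
    induction h with
    | rel x y h =>
      exact fun _ => ⟨(mem_V_of_adjOn h).1, (mem_V_of_adjOn h).2, .rel _ _ h⟩
    | refl x => exact fun hx => ⟨hx.elim id id, hx.elim id id, .refl _⟩
    | symm x y _ ih =>
      intro hxy
      obtain ⟨hx, hy, h⟩ := ih hxy.symm
      exact ⟨hy, hx, h.symm⟩
    | trans x y z _ _ ih1 ih2 =>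
      rintro (hx | hz)
      · obtain ⟨hx, hy, h1⟩ := ih1 (Or.inl hx)
        obtain ⟨_, hz, h2⟩ := ih2 (Or.inl hy)
        exact ⟨hx, hz, h1.trans _ _ _ h2⟩
      · obtain ⟨hy, hz, h2⟩ := ih2 (Or.inr hz)
        obtain ⟨hx, _, h1⟩ := ih1 (Or.inr hy)
        exact ⟨hx, hz, h1.trans _ _ _ h2⟩

theorem ncomp_le_of_forall_eqvGen {F F' : Finset ℕ}
    (h : ∀ u v, G.adjOn F u v → Relation.EqvGen (G.adjOn F') u v) :
    G.ncomp G.V F' ≤ G.ncomp G.V F :=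
  card_quot_le_of_eqvGen fun a b hab => (eqvGen_subtype_iff a b).2 (h a b hab)

theorem ncomp_lt_of_forall_eqvGen {F F' : Finset ℕ}
    (h : ∀ u v, G.adjOn F u v → Relation.EqvGen (G.adjOn F') u v) {x y : ℕ} (hx : x ∈ G.V)
    (hy : y ∈ G.V) (hxy' : Relation.EqvGen (G.adjOn F') x y)
    (hxy : ¬ Relation.EqvGen (G.adjOn F) x y) :
    G.ncomp G.V F' < G.ncomp G.V F :=
  card_quot_lt_of_eqvGen (fun a b hab => (eqvGen_subtype_iff a b).2 (h a b hab))
    (a := ⟨x, hx⟩) (b := ⟨y, hy⟩) ((eqvGen_subtype_iff _ _).2 hxy')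
    fun h' => hxy ((eqvGen_subtype_iff _ _).1 h')

theorem ncomp_eq_one_iff {F : Finset ℕ} :
    G.ncomp G.V F = 1 ↔
      G.V.Nonempty ∧ ∀ u ∈ G.V, ∀ v ∈ G.V, Relation.EqvGen (G.adjOn F) u v := by
  rw [ncomp, Nat.card_eq_one_iff_unique]
  constructor
  · rintro ⟨hsub, ⟨q⟩⟩
    obtain ⟨a, -⟩ := q.exists_rep
    refine ⟨⟨a.1, a.2⟩, fun u hu v hv => ?_⟩
    exact (eqvGen_subtype_iff ⟨u, hu⟩ ⟨v, hv⟩).1 (Quot.eqvGen_exact (hsub.elim _ _))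
  · rintro ⟨⟨v₀, hv₀⟩, hall⟩
    refine ⟨⟨?_⟩, ⟨Quot.mk _ ⟨v₀, hv₀⟩⟩⟩
    rintro ⟨a⟩ ⟨b⟩
    exact Quot.eqvGen_sound ((eqvGen_subtype_iff a b).2 (hall a.1 a.2 b.1 b.2))

theorem ConnSub.mono {F F' : Finset ℕ} (h : G.ConnSub G.V F) (hFF : F ⊆ F') :
    G.ConnSub G.V F' := by
  obtain ⟨hne, hall⟩ := ncomp_eq_one_iff.1 h
  exact ncomp_eq_one_iff.2 ⟨hne, fun u hu v hv =>
    Relation.EqvGen.mono (fun _ _ => adjOn_mono hFF) _ _ (hall u hu v hv)⟩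

theorem ncomp_eq_card_of_inter_eq_empty {F : Finset ℕ} (h : F ∩ G.E = ∅) :
    G.ncomp G.V F = G.V.card := by
  rw [ncomp, card_quot_eq_of_forall_not, Nat.card_eq_fintype_card, Fintype.card_coe]
  rintro a b ⟨e, he, -⟩
  simp [h] at he

variable (G) in
theorem ncomp_erase_le (F : Finset ℕ) (e : ℕ) :
    G.ncomp G.V (F.erase e) ≤ G.ncomp G.V F + 1 := by
  by_cases he : e ∈ G.E
  · obtain ⟨h1, h2⟩ := G.ends_mem e he
    refine card_quot_le_add_one (a := ⟨_, h1⟩) (b := ⟨_, h2⟩) ?_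
      fun x y h => .rel _ _ (adjOn_mono (Finset.erase_subset _ _) h)
    rintro x y ⟨g, hg, hends⟩
    rw [Finset.mem_inter] at hg
    by_cases hge : g = e
    · subst hge
      rcases hends with h' | h'
      · exact Or.inr (Or.inl ⟨Subtype.ext (by simp [h']), Subtype.ext (by simp [h'])⟩)
      · exact Or.inr (Or.inr ⟨Subtype.ext (by simp [h']), Subtype.ext (by simp [h'])⟩)
    · exact Or.inl ⟨g, Finset.mem_inter.2 ⟨Finset.mem_erase.2 ⟨hge, hg.1⟩, hg.2⟩, hends⟩
  · have hF : F.erase e ∩ G.E = F ∩ G.E := by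
      rw [Finset.erase_inter, Finset.erase_eq_of_notMem (fun h => he (Finset.mem_inter.1 h).2)]
    have : G.ncomp G.V (F.erase e) = G.ncomp G.V F := by
      simp only [ncomp, adjOn, hF]
    omega

variable (G) in
theorem ncomp_sdiff_le (F K : Finset ℕ) : G.ncomp G.V (F \ K) ≤ G.ncomp G.V F + K.card := by
  classical
  induction K using Finset.induction_on with
  | empty => simp
  | insert k K hk ih =>
    have h := G.ncomp_erase_le (F \ K) k
    rw [Finset.sdiff_insert, Finset.card_insert_of_notMem hk]
    omega

theorem ncomp_inter_E (F : Finset ℕ) : G.ncomp G.V (F ∩ G.E) = G.ncomp G.V F := by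
  simp only [ncomp, adjOn, Finset.inter_assoc, Finset.inter_self]

variable (G) in
theorem card_V_le (F : Finset ℕ) : G.V.card ≤ (F ∩ G.E).card + G.ncomp G.V F := by
  have h := G.ncomp_sdiff_le (F ∩ G.E) (F ∩ G.E)
  rw [Finset.sdiff_self, ncomp_eq_card_of_inter_eq_empty (Finset.empty_inter _),
    ncomp_inter_E] at h
  omega

variable (G) in
theorem subGenus_nonneg (F : Finset ℕ) : 0 ≤ G.subGenus G.V F := by
  have h := G.card_V_le F
  have hw : 0 ≤ ∑ v ∈ G.V, (G.w v : ℤ) := Finset.sum_nonneg fun _ _ => Int.natCast_nonneg _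
  unfold subGenus
  omega

theorem ncomp_add_card_le {F F' : Finset ℕ} (hFF : F ⊆ F') {s : Finset ℕ} (hs : s ⊆ G.V)
    (hdist : ∀ x ∈ s, ∀ y ∈ s, x ≠ y → ¬ Relation.EqvGen (G.adjOn F) x y)
    (hmerge : ∀ x ∈ s, ∀ y ∈ s, Relation.EqvGen (G.adjOn F') x y) :
    G.ncomp G.V F' + s.card ≤ G.ncomp G.V F + 1 := by
  have hcard : (s.subtype (· ∈ G.V)).card = s.card := by
    rw [Finset.card_subtype, Finset.filter_true_of_mem fun x hx => hs hx]
  rw [← hcard]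
  refine card_quot_add_card_le
    (fun a b hab => (eqvGen_subtype_iff a b).2 (.rel _ _ (adjOn_mono hFF hab))) _
    (fun x hx y hy hxy h => ?_) fun x hx y hy => ?_
  · rw [Finset.mem_subtype] at hx hy
    exact hdist x hx y hy (fun h' => hxy (Subtype.ext h')) ((eqvGen_subtype_iff x y).1 h)
  · rw [Finset.mem_subtype] at hx hy
    exact (eqvGen_subtype_iff x y).2 (hmerge x hx y hy)

theorem exists_separates_of_eqvGen {F : Finset ℕ} {Z : Set ℕ} {u v : ℕ}
    (h : Relation.EqvGen (G.adjOn F) u v) (huv : Separates Z (u, v)) :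
    ∃ e ∈ F ∩ G.E, Separates Z (G.ends e) := by
  induction h with
  | rel x y hxy =>
    obtain ⟨e, he, hends | hends⟩ := hxy <;> refine ⟨e, he, ?_⟩ <;> rw [hends] <;>
      unfold Separates at huv ⊢ <;> tauto
  | refl x => unfold Separates at huv; tauto
  | symm x y _ ih => exact ih (by unfold Separates at huv ⊢; tauto)
  | trans x y z _ _ ih1 ih2 =>
    by_cases hy : y ∈ Z
    · rcases huv with ⟨hx, hz⟩ | ⟨hx, hz⟩
      · exact ih2 (Or.inl ⟨hy, hz⟩)
      · exact ih1 (Or.inr ⟨hx, hy⟩)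
    · rcases huv with ⟨hx, hz⟩ | ⟨hx, hz⟩
      · exact ih1 (Or.inl ⟨hx, hy⟩)
      · exact ih2 (Or.inr ⟨hy, hz⟩)

theorem mem_iff_of_cutEdges_eq_empty {S Z : Finset ℕ} (hcut : G.cutEdges S Z = ∅) {u v : ℕ}
    (h : Relation.EqvGen (G.adjOn (G.E \ S)) u v) : u ∈ Z ↔ v ∈ Z := by
  by_contra huv
  obtain ⟨e, he, hsep⟩ := exists_separates_of_eqvGen (Z := ↑Z) h (separates_iff.2 huv)
  rw [Finset.inter_eq_left.2 Finset.sdiff_subset] at he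
  simpa [hcut] using mem_cutEdges.2 ⟨he, hsep⟩

variable (G) in
noncomputable def compRep (S : Finset ℕ) (v : ℕ) : ℕ :=
  sInf {u | Relation.EqvGen (G.adjOn (G.E \ S)) u v}

theorem compRep_eq_iff {S : Finset ℕ} {u v : ℕ} :
    G.compRep S u = G.compRep S v ↔ Relation.EqvGen (G.adjOn (G.E \ S)) u v := by
  have hspec : ∀ v, Relation.EqvGen (G.adjOn (G.E \ S)) (G.compRep S v) v := fun v =>
    Nat.sInf_mem (s := {u | Relation.EqvGen (G.adjOn (G.E \ S)) u v}) ⟨v, .refl v⟩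
  refine ⟨fun h => ?_, fun h => ?_⟩
  · have h1 := hspec u
    rw [h] at h1
    exact h1.symm.trans _ _ _ (hspec v)
  · unfold compRep
    congr 1
    ext x
    exact ⟨fun hx => hx.trans _ _ _ h, fun hx => hx.trans _ _ _ h.symm⟩

theorem exists_cutEdges_eq_singleton {S : Finset ℕ} {e : ℕ} (h : G.IsBridge S e) :
    ∃ Z ⊆ G.V, Z.Nonempty ∧ Z ≠ G.V ∧ G.cutEdges S Z = {e} := by
  obtain ⟨heS, hlt⟩ := h
  obtain ⟨hx, hy⟩ := G.ends_mem e (Finset.mem_sdiff.1 heS).1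
  set H := (G.E \ S).erase e
  set x := (G.ends e).1
  set y := (G.ends e).2
  rw [Finset.sdiff_insert] at hlt
  have hxy : ¬ Relation.EqvGen (G.adjOn H) x y := by
    intro hxy
    refine hlt.not_ge (ncomp_le_of_forall_eqvGen ?_)
    rintro u v ⟨g, hg, hends⟩
    by_cases hge : g = e
    · subst hge
      rcases hends with h' | h'
      · simpa [x, y, h'] using hxy
      · simpa [x, y, h'] using hxy.symm
    · exact .rel _ _ ⟨g, by simpa [H, hge] using hg, hends⟩
  have hclosed : ∀ f ∈ H, (Relation.EqvGen (G.adjOn H) x (G.ends f).1 ↔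
      Relation.EqvGen (G.adjOn H) x (G.ends f).2) := fun f hf =>
    have hadj := adjOn_ends hf (Finset.mem_sdiff.1 (Finset.mem_of_mem_erase hf)).1
    ⟨fun h => h.trans _ _ _ (Relation.EqvGen.rel _ _ hadj),
      fun h => h.trans _ _ _ (Relation.EqvGen.rel _ _ hadj).symm⟩
  have hx' : x ∈ G.V.filter (Relation.EqvGen (G.adjOn H) x) :=
    Finset.mem_filter.2 ⟨hx, .refl x⟩
  have hy' : y ∉ G.V.filter (Relation.EqvGen (G.adjOn H) x) := fun h =>
    hxy (Finset.mem_filter.1 h).2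
  refine ⟨G.V.filter (Relation.EqvGen (G.adjOn H) x), Finset.filter_subset _ _, ⟨x, hx'⟩,
    fun h => hy' (h.symm ▸ hy), ?_⟩
  ext f
  rw [mem_cutEdges, Finset.mem_singleton]
  refine ⟨fun ⟨hf, hsep⟩ => ?_, fun hf => hf ▸ ⟨heS, Or.inl ⟨hx', hy'⟩⟩⟩
  by_contra hfe
  have := hclosed f (Finset.mem_erase.2 ⟨hfe, hf⟩)
  have hf1 := (G.ends_mem f (Finset.mem_sdiff.1 hf).1)
  simp only [Separates, Finset.coe_filter, Set.mem_ofPred_eq] at hsep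
  tauto

theorem isBridge_of_forall_separates {T : Finset ℕ} {f : ℕ} (hf : f ∈ G.E \ T) {Z : Set ℕ}
    (hsep : Separates Z (G.ends f))
    (honly : ∀ g ∈ G.E \ T, g ≠ f → ¬ Separates Z (G.ends g)) :
    G.IsBridge T f := by
  have hfE := (Finset.mem_sdiff.1 hf).1
  refine ⟨hf, ?_⟩
  rw [Finset.sdiff_insert]
  refine ncomp_lt_of_forall_eqvGen (fun u v h => .rel _ _ (adjOn_mono (Finset.erase_subset _ _) h))
    (G.ends_mem f hfE).1 (G.ends_mem f hfE).2 (.rel _ _ (adjOn_ends hf hfE)) fun h => ?_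
  obtain ⟨g, hg, hgsep⟩ := exists_separates_of_eqvGen h hsep
  obtain ⟨hgf, hgT⟩ := Finset.mem_erase.1 (Finset.mem_inter.1 hg).1
  exact honly g hgT hgf hgsep

/-! ### Classes of orientations -/

theorem sdiff_subset_sdiff_E {S T : Finset ℕ} (hTS : T ⊆ S) : G.E \ S ⊆ G.E \ T :=
  Finset.sdiff_subset_sdiff subset_rfl hTS

theorem IsOrientOn.eq_none {S : Finset ℕ} {O : Orient} (hO : G.IsOrientOn S O) {e : ℕ}
    (he : e ∉ G.E \ S) : O e = none :=
  not_not.1 fun h => he ((hO e).1 h)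

theorem IsOrientOn.restr_eq {S : Finset ℕ} {O : Orient} (hO : G.IsOrientOn S O) :
    restr O (G.E \ S) = O := by
  funext e
  by_cases h : e ∈ G.E \ S
  · exact restr_apply_of_mem h
  · rw [restr_apply_of_notMem h, hO.eq_none h]

theorem IsOrientOn.restr {S T : Finset ℕ} {O : Orient} (hO : G.IsOrientOn T O) (hTS : T ⊆ S) :
    G.IsOrientOn S (restr O (G.E \ S)) := by
  intro e
  by_cases h : e ∈ G.E \ S
  · rw [restr_apply_of_mem h]
    exact ⟨fun _ => h, fun _ => (hO e).2 (sdiff_subset_sdiff_E hTS h)⟩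
  · simp [restr_apply_of_notMem h, h]

theorem mem_biE {O : Orient} {e : ℕ} : e ∈ G.biE O ↔ e ∈ G.E ∧ O e = some EdgeDir.bi :=
  Finset.mem_filter

theorem biE_restr (O : Orient) (D : Finset ℕ) : G.biE (restr O D) = G.biE O ∩ D := by
  ext e
  by_cases he : e ∈ D <;> simp [mem_biE, he, restr_apply_of_mem, restr_apply_of_notMem]

theorem IsOrientOn.mem_of_mem_biE {S : Finset ℕ} {O : Orient} (hO : G.IsOrientOn S O) {e : ℕ}
    (he : e ∈ G.biE O) : e ∈ G.E \ S :=
  (hO e).1 (by simp [(mem_biE.1 he).2])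

theorem tOr_eq_zero_of_forall_eq_none {O : Orient} (h : ∀ e ∈ G.E, O e = none) (v : ℕ) :
    G.tOr O v = 0 :=
  Finset.sum_eq_zero fun e he => by rw [h e he]; rfl

theorem tOr_eq_zero_of_notMem {O : Orient} {v : ℕ} (hv : v ∉ G.V) : G.tOr O v = 0 := by
  refine Finset.sum_eq_zero fun e he => ?_
  obtain ⟨h1, h2⟩ := G.ends_mem e he
  have hn1 : (G.ends e).1 ≠ v := fun h => hv (h ▸ h1)
  have hn2 : (G.ends e).2 ≠ v := fun h => hv (h ▸ h2)
  rcases O e with _ | _ | _ | _ <;> simp [dirT, hn1, hn2]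

/-- The convention of `divOr` for edgeless `G − S` is harmless: then both orientations are
empty. -/
theorem equivOr_iff_tOr {S : Finset ℕ} {b : ℕ} {O O' : Orient} :
    G.equivOr S b O O' ↔ G.IsOrientOn S O ∧ G.IsOrientOn S O' ∧ G.tOr O = G.tOr O' := by
  refine and_congr_right fun hO => and_congr_right fun hO' => ?_
  by_cases hES : G.E \ S = ∅
  · have hnone : ∀ P, G.IsOrientOn S P → ∀ e ∈ G.E, P e = none := fun P hP e _ =>
      hP.eq_none (by simp [hES])
    unfold divOr
    simp only [hES, if_true, true_iff]
    funext v
    rw [tOr_eq_zero_of_forall_eq_none (hnone O hO), tOr_eq_zero_of_forall_eq_none (hnone O' hO')]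
  · constructor
    · intro h
      funext v
      by_cases hv : v ∈ G.V
      · have := congrFun h v
        unfold divOr at this
        simp only [hv, hES, if_true, if_false] at this
        omega
      · rw [tOr_eq_zero_of_notMem hv, tOr_eq_zero_of_notMem hv]
    · intro h
      unfold divOr
      simp only [hES, h]

theorem equivOr_refl {S : Finset ℕ} {b : ℕ} {O : Orient} (h : G.IsOrientOn S O) :
    G.equivOr S b O O :=
  ⟨h, h, rfl⟩

theorem equivOr.symm {S : Finset ℕ} {b : ℕ} {O O' : Orient} (h : G.equivOr S b O O') :
    G.equivOr S b O' O :=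
  ⟨h.2.1, h.1, h.2.2.symm⟩

theorem equivOr.trans {S : Finset ℕ} {b : ℕ} {O O' O'' : Orient} (h : G.equivOr S b O O')
    (h' : G.equivOr S b O' O'') : G.equivOr S b O O'' :=
  ⟨h.1, h'.2.1, h.2.2.trans h'.2.2⟩

theorem tOr_piecewise_add (D : Finset ℕ) (O₁ O : Orient) (v : ℕ) :
    G.tOr (D.piecewise O₁ O) v + G.tOr (restr O D) v = G.tOr O v + G.tOr (restr O₁ D) v := by
  simp only [tOr, ← Finset.sum_add_distrib]
  refine Finset.sum_congr rfl fun e _ => ?_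
  by_cases he : e ∈ D
  · rw [D.piecewise_eq_of_mem _ _ he, restr_apply_of_mem he, restr_apply_of_mem he, add_comm]
  · rw [D.piecewise_eq_of_notMem _ _ he, restr_apply_of_notMem he, restr_apply_of_notMem he]

/-- Glue `O₁` on `G − S` to `O` elsewhere: in-degrees add up over edges. -/
theorem exists_equivOr_restr_eq {S T : Finset ℕ} {b : ℕ} (hTS : T ⊆ S) {O O₁ : Orient}
    (hO : G.IsOrientOn T O) (h : G.equivOr S b O₁ (restr O (G.E \ S))) :
    ∃ O₂, G.equivOr T b O₂ O ∧ restr O₂ (G.E \ S) = O₁ := by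
  obtain ⟨hO₁, -, ht⟩ := equivOr_iff_tOr.1 h
  refine ⟨(G.E \ S).piecewise O₁ O, equivOr_iff_tOr.2 ⟨fun e => ?_, hO, ?_⟩, ?_⟩
  · by_cases he : e ∈ G.E \ S
    · rw [Finset.piecewise_eq_of_mem _ _ _ he]
      exact ⟨fun _ => sdiff_subset_sdiff_E hTS he, fun _ => (hO₁ e).2 he⟩
    · rw [Finset.piecewise_eq_of_notMem _ _ _ he]
      exact hO e
  · funext v
    have := G.tOr_piecewise_add (G.E \ S) O₁ O v
    rw [hO₁.restr_eq, ← ht] at this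
    omega
  · funext e
    by_cases he : e ∈ G.E \ S
    · rw [restr_apply_of_mem he, Finset.piecewise_eq_of_mem _ _ _ he]
    · rw [restr_apply_of_notMem he, hO₁.eq_none he]

variable (G) in
def cutIn (S : Finset ℕ) (O : Orient) (Z W : Finset ℕ) : ℕ :=
  ∑ e ∈ G.cutEdges S Z, ∑ v ∈ W, dirT (O e) (G.ends e) v

theorem exists_cut_target_iff {S : Finset ℕ} {O : Orient} {Z W : Finset ℕ} :
    (∃ e ∈ G.cutEdges S Z, ∃ v ∈ W, 0 < dirT (O e) (G.ends e) v) ↔ 0 < G.cutIn S O Z W := by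
  simp only [cutIn, Finset.sum_pos_iff_of_nonneg (fun _ _ => Nat.zero_le _)]

theorem cutEdges_V_sdiff (S Z : Finset ℕ) : G.cutEdges S (G.V \ Z) = G.cutEdges S Z := by
  ext e
  simp only [mem_cutEdges, Separates, Finset.coe_sdiff, Set.mem_sdiff, Finset.mem_coe,
    and_congr_right_iff]
  intro he
  have := G.ends_mem e (Finset.mem_sdiff.1 he).1
  tauto

/-- An edge inside `W` has one target in `W`, two if bioriented. -/
theorem sum_tOr_eq {S : Finset ℕ} {O : Orient} (hO : G.IsOrientOn S O) (W : Finset ℕ) :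
    ∑ v ∈ W, G.tOr O v =
      (G.indEdges S W).card + (G.indEdges S W ∩ G.biE O).card + G.cutIn S O W W := by
  unfold tOr
  rw [Finset.sum_comm, ← Finset.sum_subset Finset.sdiff_subset fun e _ he => by
      rw [hO.eq_none he]; simp [dirT],
    ← Finset.sum_filter_add_sum_filter_not _ fun e => (G.ends e).1 ∈ W ∧ (G.ends e).2 ∈ W]
  have hind : ∑ e ∈ G.indEdges S W, ∑ v ∈ W, dirT (O e) (G.ends e) v =
      (G.indEdges S W).card + (G.indEdges S W ∩ G.biE O).card := by
    rw [Finset.sum_congr rfl fun e he => sum_dirT_of_mem ((hO e).2 (mem_indEdges.1 he).1)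
      (mem_indEdges.1 he).2.1 (mem_indEdges.1 he).2.2, Finset.sum_add_distrib,
      Finset.sum_boole]
    simp only [Finset.sum_const, smul_eq_mul, mul_one, Nat.cast_id, Nat.add_left_cancel_iff]
    congr 1
    ext e
    simp only [Finset.mem_filter, Finset.mem_inter, mem_biE, mem_indEdges, Finset.mem_sdiff]
    tauto
  have hcut : ∑ e ∈ (G.E \ S).filter (fun e => ¬((G.ends e).1 ∈ W ∧ (G.ends e).2 ∈ W)),
      ∑ v ∈ W, dirT (O e) (G.ends e) v = G.cutIn S O W W := by
    refine (Finset.sum_subset (fun e he => ?_) fun e he hcut => ?_).symm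
    · obtain ⟨he, hsep⟩ := mem_cutEdges.1 he
      unfold Separates at hsep
      simp only [Finset.mem_coe] at hsep
      exact Finset.mem_filter.2 ⟨he, by tauto⟩
    · rw [Finset.mem_filter] at he
      have : ¬ Separates ↑W (G.ends e) := fun h => hcut (mem_cutEdges.2 ⟨he.1, h⟩)
      unfold Separates at this
      simp only [Finset.mem_coe] at this
      exact sum_dirT_of_notMem _ (by tauto) (by tauto)
  rw [← hind, ← hcut]
  rfl

theorem cutIn_V_sdiff (S : Finset ℕ) (O : Orient) (Z W : Finset ℕ) :
    G.cutIn S O (G.V \ Z) W = G.cutIn S O Z W := by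
  rw [cutIn, cutEdges_V_sdiff, cutIn]

theorem card_biE_eq_of_tOr_eq {S : Finset ℕ} {O O' : Orient} (hO : G.IsOrientOn S O)
    (hO' : G.IsOrientOn S O') (ht : G.tOr O = G.tOr O') : (G.biE O).card = (G.biE O').card := by
  have hcut : G.cutEdges S G.V = ∅ := Finset.eq_empty_of_forall_notMem fun e he => by
    obtain ⟨he, hsep⟩ := mem_cutEdges.1 he
    have := G.ends_mem e (Finset.mem_sdiff.1 he).1
    unfold Separates at hsep
    simp only [Finset.mem_coe] at hsep
    tauto
  have hbi : ∀ P, G.IsOrientOn S P → G.indEdges S G.V ∩ G.biE P = G.biE P := fun P hP =>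
    Finset.inter_eq_right.2 fun e he => mem_indEdges.2
      ⟨hP.mem_of_mem_biE he, G.ends_mem e (mem_biE.1 he).1⟩
  have h := sum_tOr_eq hO G.V
  have h' := sum_tOr_eq hO' G.V
  simp only [cutIn, hcut, Finset.sum_empty, hbi O hO, hbi O' hO', ht] at h h'
  omega

theorem TotCyc.of_tOr_eq {S : Finset ℕ} {O O' : Orient} (hO : G.IsOrientOn S O)
    (hO' : G.IsOrientOn S O') (ht : G.tOr O = G.tOr O') (hbi : G.biE O = ∅)
    (hbi' : G.biE O' = ∅) (h : G.TotCyc S O) : G.TotCyc S O' := by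
  have key : ∀ W, G.cutIn S O W W = G.cutIn S O' W W := fun W => by
    have h := sum_tOr_eq hO W
    have h' := sum_tOr_eq hO' W
    simp only [hbi, hbi', Finset.inter_empty, Finset.card_empty, ht] at h h'
    omega
  intro Z hZV hZne hZV' hcut
  obtain ⟨h1, h2⟩ := h Z hZV hZne hZV' hcut
  refine ⟨?_, ?_⟩
  · rw [exists_cut_target_iff] at h1 ⊢
    rwa [← key]
  · rw [exists_cut_target_iff, ← cutIn_V_sdiff] at h2 ⊢
    rwa [← key]

theorem RootedAt.of_tOr_eq {S : Finset ℕ} {O O' : Orient} {e₀ e₁ : ℕ} (hO : G.IsOrientOn S O)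
    (hO' : G.IsOrientOn S O') (ht : G.tOr O = G.tOr O') (hbi : G.biE O = {e₀})
    (hbi' : G.biE O' = {e₁}) (h : G.RootedAt S O e₀) : G.RootedAt S O' e₁ := by
  intro Z hZV hZV' he₁
  have he₀ := hO.mem_of_mem_biE (hbi ▸ Finset.mem_singleton_self e₀)
  have hbi₀ : O e₀ = some EdgeDir.bi := (mem_biE.1 (hbi ▸ Finset.mem_singleton_self e₀)).2
  obtain ⟨hx, hy⟩ := G.ends_mem e₀ (Finset.mem_sdiff.1 he₀).1
  have hsum := sum_tOr_eq hO (G.V \ Z)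
  have hsum' := sum_tOr_eq hO' (G.V \ Z)
  have h₁ : G.indEdges S (G.V \ Z) ∩ {e₁} = ∅ := by
    simp only [Finset.inter_singleton, mem_indEdges, Finset.mem_sdiff, (mem_indEdges.1 he₁).2.1,
      not_true_eq_false, and_false, false_and, if_false]
  rw [ht, hbi] at hsum
  rw [hbi', h₁, Finset.card_empty] at hsum'
  rw [exists_cut_target_iff, ← cutIn_V_sdiff]
  by_cases hout : e₀ ∈ G.indEdges S (G.V \ Z)
  · rw [Finset.inter_singleton_of_mem hout, Finset.card_singleton] at hsum
    omega
  rw [Finset.inter_singleton_of_notMem hout, Finset.card_empty] at hsum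
  suffices 0 < G.cutIn S O Z (G.V \ Z) by rw [cutIn_V_sdiff] at hsum hsum' ⊢; omega
  by_cases hin : e₀ ∈ G.indEdges S Z
  · exact exists_cut_target_iff.1 (h Z hZV hZV' hin)
  · rw [← exists_cut_target_iff]
    simp only [mem_indEdges, Finset.mem_sdiff, he₀, hx, hy, true_and, not_and] at hin hout
    refine ⟨e₀, mem_cutEdges.2 ⟨he₀, by unfold Separates; simp only [Finset.mem_coe]; tauto⟩, ?_⟩
    by_cases h1 : (G.ends e₀).1 ∈ Z
    · exact ⟨(G.ends e₀).2, Finset.mem_sdiff.2 ⟨hy, hin h1⟩, by simp [hbi₀, dirT]⟩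
    · exact ⟨(G.ends e₀).1, Finset.mem_sdiff.2 ⟨hx, h1⟩, by simp [hbi₀, dirT]⟩

theorem memOb_of_equivOr {S : Finset ℕ} {b : ℕ} {O O' : Orient} (h : G.equivOr S b O O')
    (hm : G.MemOb S b O) : G.MemOb S b O' := by
  obtain ⟨hO, hO', ht⟩ := equivOr_iff_tOr.1 h
  have hcard := card_biE_eq_of_tOr_eq hO hO' ht
  refine ⟨hO', ?_⟩
  rcases hm.2 with ⟨hb, hbi, htc⟩ | ⟨hb, ⟨e₀, hbi, hrt⟩ | hdeg⟩
  · have hbi' : G.biE O' = ∅ := Finset.card_eq_zero.1 (by rw [← hcard, hbi, Finset.card_empty])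
    exact Or.inl ⟨hb, hbi', htc.of_tOr_eq hO hO' ht hbi hbi'⟩
  · obtain ⟨e₁, hbi'⟩ := Finset.card_eq_one.1 (by rw [← hcard, hbi, Finset.card_singleton])
    exact Or.inr ⟨hb, Or.inl ⟨e₁, hbi', hrt.of_tOr_eq hO hO' ht hbi hbi'⟩⟩
  · exact Or.inr ⟨hb, Or.inr hdeg⟩

/-! ### The order -/

theorem exists_restr_iff_forall_restr {S T : Finset ℕ} {b : ℕ} (hTS : T ⊆ S) {OS OT : Orient}
    (hOS : G.IsOrientOn S OS) :
    (∃ OS' OT', G.equivOr S b OS' OS ∧ G.equivOr T b OT' OT ∧ restr OT' (G.E \ S) = OS') ↔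
      ∀ OS', G.equivOr S b OS' OS →
        ∃ OT', G.equivOr T b OT' OT ∧ restr OT' (G.E \ S) = OS' := by
  refine ⟨?_, fun h => ?_⟩
  · rintro ⟨OS₀, OT₀, hS₀, hT₀, rfl⟩ OS' hOS'
    obtain ⟨OT', hOT', hres⟩ := exists_equivOr_restr_eq hTS hT₀.1 (hOS'.trans hS₀.symm)
    exact ⟨OT', hOT'.trans hT₀, hres⟩
  · obtain ⟨OT', hOT', hres⟩ := h OS (equivOr_refl hOS)
    exact ⟨OS, OT', equivOr_refl hOS, hOT', hres⟩

theorem leOPbar_refl {b : ℕ} {p : Finset ℕ × Orient} (hp : G.IsOrientOn p.1 p.2) :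
    G.leOPbar b p p :=
  ⟨subset_rfl, p.2, equivOr_refl hp, by rw [hp.restr_eq]; exact equivOr_refl hp⟩

theorem leOPbar_trans {b : ℕ} {p q r : Finset ℕ × Orient} (hpq : G.leOPbar b p q)
    (hqr : G.leOPbar b q r) : G.leOPbar b p r := by
  obtain ⟨hqp, O₁, hO₁q, hO₁p⟩ := hpq
  obtain ⟨hrq, O₂, hO₂r, hO₂q⟩ := hqr
  obtain ⟨O₃, hO₃r, hres⟩ := exists_equivOr_restr_eq hrq hO₂r.1 (hO₁q.trans hO₂q.symm)
  refine ⟨hrq.trans hqp, O₃, hO₃r.trans hO₂r, ?_⟩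
  rwa [← restr_restr (sdiff_subset_sdiff_E hqp), hres]

theorem eqOP_of_leOPbar {b : ℕ} {p q : Finset ℕ × Orient} (h : G.leOPbar b p q)
    (hpq : p.1 = q.1) : G.eqOP b p q := by
  obtain ⟨-, O, hOq, hOp⟩ := h
  rw [hpq, hOq.1.restr_eq] at hOp
  exact ⟨hpq, by rw [hpq]; exact hOp.symm.trans hOq⟩

theorem isPartialOrderOnMod_leOPbar (b : ℕ) :
    IsPartialOrderOnMod (G.POb b) (G.eqOP b) (G.leOPbar b) :=
  ⟨fun _ hp => leOPbar_refl hp.2.1, fun _ _ _ _ _ _ => leOPbar_trans,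
    fun _ _ _ _ hpq hqp => eqOP_of_leOPbar hpq (Finset.Subset.antisymm hqp.1 hpq.1)⟩

/-! ### Extending orientations -/

variable (G) in
def extendOr (S T : Finset ℕ) (O P : Orient) : Orient :=
  (G.E \ S).piecewise O (restr P (G.E \ T))

theorem extendOr_of_mem {S T : Finset ℕ} {O P : Orient} {e : ℕ} (he : e ∈ G.E \ S) :
    G.extendOr S T O P e = O e :=
  Finset.piecewise_eq_of_mem _ _ _ he

theorem extendOr_of_mem_sdiff {S T : Finset ℕ} {O P : Orient} {e : ℕ}
    (he : e ∈ (G.E \ T) \ (G.E \ S)) : G.extendOr S T O P e = P e := by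
  rw [extendOr, Finset.piecewise_eq_of_notMem _ _ _ (Finset.mem_sdiff.1 he).2,
    restr_apply_of_mem (Finset.mem_sdiff.1 he).1]

theorem isOrientOn_extendOr {S T : Finset ℕ} {O P : Orient} (hTS : T ⊆ S)
    (hO : G.IsOrientOn S O) (hP : ∀ e, P e ≠ none) : G.IsOrientOn T (G.extendOr S T O P) := by
  intro e
  by_cases hS : e ∈ G.E \ S
  · rw [extendOr_of_mem hS]
    exact ⟨fun _ => sdiff_subset_sdiff_E hTS hS, fun _ => (hO e).2 hS⟩
  by_cases hT : e ∈ G.E \ T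
  · rw [extendOr_of_mem_sdiff (Finset.mem_sdiff.2 ⟨hT, hS⟩)]
    exact ⟨fun _ => hT, fun _ => hP e⟩
  · simp [extendOr, hS, hT, restr_apply_of_notMem]

theorem restr_extendOr {S T : Finset ℕ} {O P : Orient} (hO : G.IsOrientOn S O) :
    restr (G.extendOr S T O P) (G.E \ S) = O := by
  funext e
  by_cases he : e ∈ G.E \ S
  · rw [restr_apply_of_mem he, extendOr_of_mem he]
  · rw [restr_apply_of_notMem he, hO.eq_none he]

theorem biE_extendOr {S T : Finset ℕ} {O P : Orient} (hO : G.IsOrientOn S O)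
    (hP : ∀ e, P e ≠ some EdgeDir.bi) : G.biE (G.extendOr S T O P) = G.biE O := by
  ext e
  simp only [mem_biE, and_congr_right_iff]
  intro heE
  by_cases hS : e ∈ G.E \ S
  · rw [extendOr_of_mem hS]
  · rw [hO.eq_none hS]
    by_cases hT : e ∈ G.E \ T
    · simp [extendOr_of_mem_sdiff (Finset.mem_sdiff.2 ⟨hT, hS⟩), hP e]
    · simp [extendOr, hS, hT, restr_apply_of_notMem]

theorem exists_cut_target_of_subset {S T Z W : Finset ℕ} {O O' : Orient} (hTS : T ⊆ S)
    (hagree : ∀ e ∈ G.E \ S, O' e = O e)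
    (h : ∃ e ∈ G.cutEdges S Z, ∃ v ∈ W, 0 < dirT (O e) (G.ends e) v) :
    ∃ e ∈ G.cutEdges T Z, ∃ v ∈ W, 0 < dirT (O' e) (G.ends e) v := by
  obtain ⟨e, he, v, hv, hpos⟩ := h
  obtain ⟨heS, hsep⟩ := mem_cutEdges.1 he
  exact ⟨e, mem_cutEdges.2 ⟨sdiff_subset_sdiff_E hTS heS, hsep⟩, v, hv, hagree e heS ▸ hpos⟩

theorem TotCyc.extend {S T : Finset ℕ} {O O' : Orient} (h : G.TotCyc S O) (hTS : T ⊆ S)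
    (hagree : ∀ e ∈ G.E \ S, O' e = O e)
    (hnew : ∀ Z ⊆ G.V, G.cutEdges S Z = ∅ → (G.cutEdges T Z).Nonempty →
      (∃ e ∈ G.cutEdges T Z, ∃ v ∈ Z, 0 < dirT (O' e) (G.ends e) v) ∧
      (∃ e ∈ G.cutEdges T Z, ∃ v ∈ G.V \ Z, 0 < dirT (O' e) (G.ends e) v)) :
    G.TotCyc T O' := by
  intro Z hZV hZne hZV' hcut
  rcases (G.cutEdges S Z).eq_empty_or_nonempty with hS | hS
  · exact hnew Z hZV hS hcut
  · obtain ⟨h1, h2⟩ := h Z hZV hZne hZV' hS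
    exact ⟨exists_cut_target_of_subset hTS hagree h1, exists_cut_target_of_subset hTS hagree h2⟩

theorem RootedAt.extend {S T : Finset ℕ} {O O' : Orient} {e₀ : ℕ} (h : G.RootedAt S O e₀)
    (hTS : T ⊆ S) (hagree : ∀ e ∈ G.E \ S, O' e = O e) (he₀ : e₀ ∈ G.E \ S) :
    G.RootedAt T O' e₀ := fun Z hZV hZV' hind =>
  exists_cut_target_of_subset hTS hagree
    (h Z hZV hZV' (mem_indEdges.2 ⟨he₀, (mem_indEdges.1 hind).2⟩))

theorem rootedAt_of_card_V_eq_one (hV : G.V.card = 1) (S : Finset ℕ) (O : Orient) (e₀ : ℕ) :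
    G.RootedAt S O e₀ := by
  intro Z hZV hZV' hind
  obtain ⟨v, hv⟩ := Finset.card_eq_one.1 hV
  rw [hv, Finset.subset_singleton_iff] at hZV
  rcases hZV with rfl | rfl
  · simp [mem_indEdges] at hind
  · exact absurd hv.symm hZV'

theorem memOb_zero_iff {S : Finset ℕ} {O : Orient} :
    G.MemOb S 0 O ↔ G.IsOrientOn S O ∧ G.biE O = ∅ ∧ G.TotCyc S O := by
  simp [MemOb]

theorem memOb_one_iff {S : Finset ℕ} {O : Orient} :
    G.MemOb S 1 O ↔ G.IsOrientOn S O ∧ G.Rooted1 S O := by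
  simp [MemOb]

theorem ab_zero_iff {S : Finset ℕ} : G.Ab 0 S ↔ S ⊆ G.E ∧ ∀ e, ¬ G.IsBridge S e := by
  simp [Ab]

theorem ab_one_iff {S : Finset ℕ} : G.Ab 1 S ↔ S ⊆ G.E ∧ G.ConnSub G.V (G.E \ S) := by
  simp [Ab]

variable (G) in
noncomputable def compEnds (S : Finset ℕ) (e : ℕ) : ℕ × ℕ :=
  (G.compRep S (G.ends e).1, G.compRep S (G.ends e).2)

theorem head_compEnds (S : Finset ℕ) (ε : ℕ → Bool) (e : ℕ) :
    Robbins.head (G.compEnds S) ε e = G.compRep S (Robbins.head G.ends ε e) := by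
  unfold Robbins.head compEnds
  split_ifs <;> rfl

theorem tail_compEnds (S : Finset ℕ) (ε : ℕ → Bool) (e : ℕ) :
    Robbins.tail (G.compEnds S) ε e = G.compRep S (Robbins.tail G.ends ε e) := by
  unfold Robbins.tail compEnds
  split_ifs <;> rfl

theorem bridgeless_compEnds {S T : Finset ℕ} (hT : ∀ e, ¬ G.IsBridge T e) :
    Robbins.Bridgeless (G.compEnds S) ((G.E \ T) \ (G.E \ S)) := by
  intro e he Z hsep
  by_contra hno
  push Not at hno
  refine hT e (isBridge_of_forall_separates (Z := G.compRep S ⁻¹' Z) (Finset.mem_sdiff.1 he).1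
    hsep fun g hg hge hgsep => ?_)
  by_cases hgS : g ∈ G.E \ S
  · have := compRep_eq_iff.2 (Relation.EqvGen.rel _ _ (adjOn_ends hgS (Finset.mem_sdiff.1 hg).1))
    exact separates_iff.1 hgsep (by simp only [Set.mem_preimage, this])
  · exact hno g (Finset.mem_sdiff.2 ⟨hg, hgS⟩) hge hgsep

/-- A cut of `G − T` that no edge of `G − S` crosses is a cut of the contracted graph. -/
theorem exists_head_mem_of_cutEdges_eq_empty {S T : Finset ℕ} {ε : ℕ → Bool}
    (hε : Robbins.TotallyCyclic (G.compEnds S) ((G.E \ T) \ (G.E \ S)) ε) {Z : Finset ℕ}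
    (hS : G.cutEdges S Z = ∅) (hT : (G.cutEdges T Z).Nonempty) :
    ∃ e ∈ G.cutEdges T Z, e ∈ (G.E \ T) \ (G.E \ S) ∧ Robbins.head G.ends ε e ∈ Z := by
  have hmem : ∀ x, G.compRep S x ∈ G.compRep S '' ↑Z ↔ x ∈ Z := fun x =>
    ⟨fun ⟨v, hv, hvx⟩ => (mem_iff_of_cutEdges_eq_empty hS (compRep_eq_iff.1 hvx)).1 hv,
      fun hx => ⟨x, hx, rfl⟩⟩
  have hsepZ : ∀ e, Separates (G.compRep S '' ↑Z) (G.compEnds S e) ↔ Separates ↑Z (G.ends e) :=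
    fun e => by simp only [Separates, compEnds, hmem, Finset.mem_coe]
  obtain ⟨f, hf⟩ := hT
  obtain ⟨hfT, hfsep⟩ := mem_cutEdges.1 hf
  have hfS : f ∉ G.E \ S := fun h => by simpa [hS] using mem_cutEdges.2 ⟨h, hfsep⟩
  obtain ⟨e, he, hhead, htail⟩ :=
    hε _ ⟨f, Finset.mem_sdiff.2 ⟨hfT, hfS⟩, (hsepZ f).2 hfsep⟩
  rw [head_compEnds, hmem] at hhead
  rw [tail_compEnds, hmem] at htail
  refine ⟨e, mem_cutEdges.2 ⟨(Finset.mem_sdiff.1 he).1, ?_⟩, he, hhead⟩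
  rw [Robbins.separates_iff_head_tail (ε := ε)]
  simp only [Finset.mem_coe]
  tauto

theorem exists_memOb_zero_extension {S T : Finset ℕ} {O : Orient} (hTS : T ⊆ S)
    (hT : ∀ e, ¬ G.IsBridge T e) (hO : G.MemOb S 0 O) :
    ∃ O', G.MemOb T 0 O' ∧ restr O' (G.E \ S) = O := by
  obtain ⟨hOr, hbi, htc⟩ := memOb_zero_iff.1 hO
  obtain ⟨ε, hε⟩ := Robbins.exists_totallyCyclic (bridgeless_compEnds (S := S) hT)
  set O' := G.extendOr S T O (Orient.ofBool ε)
  have hO'bi : G.biE O' = ∅ := by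
    rw [biE_extendOr hOr (Orient.ofBool_ne_bi ε), hbi]
  have key : ∀ Y, G.cutEdges S Y = ∅ → (G.cutEdges T Y).Nonempty →
      ∃ e ∈ G.cutEdges T Y, ∃ v ∈ Y, 0 < dirT (O' e) (G.ends e) v := fun Y hS hT => by
    obtain ⟨e, he, heN, hhead⟩ := exists_head_mem_of_cutEdges_eq_empty hε hS hT
    exact ⟨e, he, _, hhead, by
      rw [show O' e = _ from extendOr_of_mem_sdiff heN, dirT_ofBool_pos_iff]⟩
  refine ⟨O', memOb_zero_iff.2 ⟨isOrientOn_extendOr hTS hOr (Orient.ofBool_ne_none ε),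
    hO'bi, htc.extend hTS (fun e he => extendOr_of_mem he) fun Z _ hS hT => ?_⟩,
    restr_extendOr hOr⟩
  refine ⟨key Z hS hT, ?_⟩
  simpa only [cutEdges_V_sdiff] using
    key (G.V \ Z) (by rwa [cutEdges_V_sdiff]) (by rwa [cutEdges_V_sdiff])

variable (G) in
def HasWalk (F : Finset ℕ) : ℕ → ℕ → ℕ → Prop
  | 0, u, v => u = v
  | n + 1, u, v => ∃ w, HasWalk F n u w ∧ G.adjOn F w v

theorem exists_hasWalk_of_eqvGen {F : Finset ℕ} {u v : ℕ}
    (h : Relation.EqvGen (G.adjOn F) u v) : ∃ n, G.HasWalk F n u v := by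
  have : Std.Symm (G.adjOn F) := ⟨fun _ _ => adjOn_symm⟩
  rw [Relation.EqvGen.eqvGen_eq_reflTransGen] at h
  induction h with
  | refl => exact ⟨0, rfl⟩
  | tail _ hbc ih =>
    obtain ⟨n, hn⟩ := ih
    exact ⟨n + 1, _, hn, hbc⟩

/-- `d` is the distance to `r`. -/
theorem exists_potential {F : Finset ℕ} (hconn : G.ConnSub G.V F) {r : ℕ} (hr : r ∈ G.V) :
    ∃ d : ℕ → ℕ, ∀ v ∈ G.V, v ≠ r → ∃ w, G.adjOn F w v ∧ d w < d v := by
  classical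
  have hreach : ∀ v ∈ G.V, ∃ n, G.HasWalk F n r v := fun v hv =>
    exists_hasWalk_of_eqvGen ((ncomp_eq_one_iff.1 hconn).2 r hr v hv)
  refine ⟨fun v => if h : ∃ n, G.HasWalk F n r v then Nat.find h else 0, fun v hv hvr => ?_⟩
  have h := hreach v hv
  have hspec := Nat.find_spec h
  rcases hn : Nat.find h with _ | n
  · rw [hn] at hspec
    exact absurd hspec.symm hvr
  rw [hn] at hspec
  obtain ⟨w, hw, hadj⟩ := hspec
  have hw' : ∃ m, G.HasWalk F m r w := ⟨n, hw⟩
  refine ⟨w, hadj, ?_⟩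
  simp only [dif_pos h, dif_pos hw', hn]
  exact Nat.lt_succ_of_le (Nat.find_min' hw' hw)

theorem isOrientOn_restr_of_ne_none {T : Finset ℕ} {P : Orient} (hP : ∀ e, P e ≠ none) :
    G.IsOrientOn T (restr P (G.E \ T)) := by
  intro e
  by_cases he : e ∈ G.E \ T <;> simp [he, hP, restr_apply_of_mem, restr_apply_of_notMem]

/-- Orient the edges away from a root, along a potential decreasing towards it, and biorient an
edge at the root. -/
theorem exists_memOb_one {T : Finset ℕ} (hconn : G.ConnSub G.V (G.E \ T)) :
    ∃ O, G.MemOb T 1 O := by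
  rcases (G.E \ T).eq_empty_or_nonempty with hET | ⟨e₀, he₀⟩
  · have hV : G.V.card = 1 := by
      rw [← ncomp_eq_card_of_inter_eq_empty (F := G.E \ T) (by rw [hET, Finset.empty_inter])]
      exact hconn
    exact ⟨fun _ => none, memOb_one_iff.2 ⟨fun e => by simp [hET], Or.inr ⟨hET, hV⟩⟩⟩
  have he₀E := (Finset.mem_sdiff.1 he₀).1
  obtain ⟨d, hd⟩ := exists_potential hconn (G.ends_mem e₀ he₀E).1
  set ε : ℕ → Bool := fun e => decide (d (G.ends e).1 ≤ d (G.ends e).2)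
  set O := restr (Function.update (Orient.ofBool ε) e₀ (some EdgeDir.bi)) (G.E \ T)
  have hO : G.IsOrientOn T O := isOrientOn_restr_of_ne_none fun e => by
    by_cases he : e = e₀ <;> simp [he, Orient.ofBool_ne_none]
  have hbi : G.biE O = {e₀} := by
    ext e
    by_cases he : e = e₀
    · simp [he, mem_biE, O, restr_apply_of_mem he₀, he₀E]
    · by_cases heT : e ∈ G.E \ T <;>
        simp [he, mem_biE, O, restr_apply_of_mem, restr_apply_of_notMem, heT, Orient.ofBool_ne_bi]
  refine ⟨O, memOb_one_iff.2 ⟨hO, Or.inl ⟨e₀, hbi, fun Z hZV hZV' hind => ?_⟩⟩⟩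
  obtain ⟨u, hu, hmin⟩ := Finset.exists_min_image (G.V \ Z) d
    (Finset.sdiff_nonempty.2 fun h => hZV' (Finset.Subset.antisymm hZV h))
  obtain ⟨huV, huZ⟩ := Finset.mem_sdiff.1 hu
  obtain ⟨w, ⟨f, hf, hends⟩, hdw⟩ :=
    hd u huV fun h => huZ (h ▸ (mem_indEdges.1 hind).2.1)
  have hwZ : w ∈ Z := by
    by_contra hwZ
    exact (hmin w (Finset.mem_sdiff.2 ⟨(mem_V_of_adjOn ⟨f, hf, hends⟩).1, hwZ⟩)).not_gt hdw
  have hfT := (Finset.mem_inter.1 hf).1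
  have hf₀ : f ≠ e₀ := by
    rintro rfl
    have := (mem_indEdges.1 hind).2
    rcases hends with h | h <;> simp [h, huZ] at this
  refine ⟨f, mem_cutEdges.2 ⟨hfT, ?_⟩, u, hu, ?_⟩
  · rcases hends with h | h <;> simp [Separates, h, hwZ, huZ]
  · rw [show O f = Orient.ofBool ε f by simp [O, restr_apply_of_mem hfT, hf₀],
      dirT_ofBool_pos_iff]
    rcases hends with h | h <;> simp [Robbins.head, ε, h, hdw.le, hdw]

theorem exists_memOb_one_extension {S T : Finset ℕ} {O : Orient} (hTS : T ⊆ S)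
    (hT : G.ConnSub G.V (G.E \ T)) (hO : G.MemOb S 1 O) :
    ∃ O', G.MemOb T 1 O' ∧ restr O' (G.E \ S) = O := by
  obtain ⟨hOr, ⟨e₀, hbi, hrt⟩ | ⟨hES, -⟩⟩ := memOb_one_iff.1 hO
  · have hfwd : ∀ e, (fun _ => some EdgeDir.fwd : Orient) e ≠ some EdgeDir.bi := by simp
    refine ⟨G.extendOr S T O fun _ => some EdgeDir.fwd, memOb_one_iff.2
      ⟨isOrientOn_extendOr hTS hOr (by simp), Or.inl ⟨e₀, by rw [biE_extendOr hOr hfwd, hbi],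
        hrt.extend hTS (fun e he => extendOr_of_mem he)
          (hOr.mem_of_mem_biE (hbi ▸ Finset.mem_singleton_self e₀))⟩⟩, restr_extendOr hOr⟩
  · obtain ⟨O', hO'⟩ := exists_memOb_one hT
    refine ⟨O', hO', funext fun e => ?_⟩
    have he : e ∉ G.E \ S := by simp [hES]
    rw [restr_apply_of_notMem he, hOr.eq_none he]

theorem memOb_E : G.MemOb G.E 0 fun _ => none :=
  memOb_zero_iff.2 ⟨fun e => by simp, by simp [biE], fun Z _ _ _ hcut => by
    simp [cutEdges] at hcut⟩

theorem exists_memOb_extension {b : ℕ} (hb : b = 0 ∨ b = 1) {S T : Finset ℕ} {O : Orient}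
    (hT : G.Ab b T) (hTS : T ⊆ S) (hO : G.MemOb S b O) :
    ∃ O', G.MemOb T b O' ∧ restr O' (G.E \ S) = O := by
  rcases hb with rfl | rfl
  · exact exists_memOb_zero_extension hTS (ab_zero_iff.1 hT).2 hO
  · exact exists_memOb_one_extension hTS (ab_one_iff.1 hT).2 hO

theorem exists_memOb {b : ℕ} (hb : b = 0 ∨ b = 1) {S : Finset ℕ} (hS : G.Ab b S) :
    ∃ O, G.MemOb S b O := by
  rcases hb with rfl | rfl
  · obtain ⟨O, hO, -⟩ := exists_memOb_extension (Or.inl rfl) hS hS.1 memOb_E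
    exact ⟨O, hO⟩
  · exact exists_memOb_one (ab_one_iff.1 hS).2

theorem isPosetQuotient_fst {b : ℕ} (hb : b = 0 ∨ b = 1) :
    IsPosetQuotient (G.POb b) (G.Ab b) (G.leOPbar b) (fun S S' => S' ⊆ S) Prod.fst := by
  refine ⟨fun _ h => h.1, fun _ _ _ _ h => h.1, fun S hS => ?_, fun S T hS hT hTS => ?_⟩
  · obtain ⟨O, hO⟩ := exists_memOb hb hS
    exact ⟨(S, O), ⟨hS, hO⟩, rfl⟩
  · obtain ⟨O, hO⟩ := exists_memOb hb hS
    obtain ⟨O', hO', hres⟩ := exists_memOb_extension hb hT hTS hO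
    refine ⟨(S, O), (T, O'), ⟨hS, hO⟩, ⟨hT, hO'⟩, rfl, rfl, hTS, O', equivOr_refl hO'.1, ?_⟩
    rw [hres]
    exact equivOr_refl hO.1

/-! ### The rank -/

theorem head_mem_V (ε : ℕ → Bool) {e : ℕ} (he : e ∈ G.E) : Robbins.head G.ends ε e ∈ G.V := by
  unfold Robbins.head
  split_ifs
  exacts [(G.ends_mem e he).2, (G.ends_mem e he).1]

theorem tail_mem_V (ε : ℕ → Bool) {e : ℕ} (he : e ∈ G.E) : Robbins.tail G.ends ε e ∈ G.V := by
  unfold Robbins.tail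
  split_ifs
  exacts [(G.ends_mem e he).1, (G.ends_mem e he).2]

theorem adjOn_tail_head (ε : ℕ → Bool) {F : Finset ℕ} {e : ℕ} (heF : e ∈ F) (heE : e ∈ G.E) :
    G.adjOn F (Robbins.tail G.ends ε e) (Robbins.head G.ends ε e) := by
  unfold Robbins.head Robbins.tail
  split_ifs
  exacts [adjOn_ends heF heE, adjOn_symm (adjOn_ends heF heE)]

theorem exists_next_edge {S T : Finset ℕ} {O : Orient} {ε : ℕ → Bool}
    (hε : ∀ e ∈ G.E \ T, O e = Orient.ofBool ε e) (htc : G.TotCyc T O) {e : ℕ}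
    (he : e ∈ (G.E \ T) \ (G.E \ S)) :
    ∃ f ∈ (G.E \ T) \ (G.E \ S),
      Relation.EqvGen (G.adjOn (G.E \ S)) (Robbins.head G.ends ε e) (Robbins.tail G.ends ε f) := by
  by_cases hloop : Relation.EqvGen (G.adjOn (G.E \ S)) (Robbins.head G.ends ε e)
      (Robbins.tail G.ends ε e)
  · exact ⟨e, he, hloop⟩
  obtain ⟨heT, heS⟩ := Finset.mem_sdiff.1 he
  have heE := (Finset.mem_sdiff.1 heT).1
  set Z := G.V.filter (Relation.EqvGen (G.adjOn (G.E \ S)) (Robbins.head G.ends ε e))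
  have hmemZ : ∀ x ∈ G.V, x ∈ Z ↔
      Relation.EqvGen (G.adjOn (G.E \ S)) (Robbins.head G.ends ε e) x := fun x hx => by
    simp [Z, hx]
  have hhZ : Robbins.head G.ends ε e ∈ Z := (hmemZ _ (head_mem_V ε heE)).2 (.refl _)
  have htZ : Robbins.tail G.ends ε e ∉ Z := fun h => hloop ((hmemZ _ (tail_mem_V ε heE)).1 h)
  have hecut : e ∈ G.cutEdges T Z :=
    mem_cutEdges.2 ⟨heT, (Robbins.separates_iff_head_tail (ε := ε)).2 (by simp [hhZ, htZ])⟩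
  obtain ⟨-, f, hf, v, hv, hpos⟩ := htc Z (Finset.filter_subset _ _) ⟨_, hhZ⟩
    (fun h => htZ (h ▸ tail_mem_V ε heE)) ⟨e, hecut⟩
  obtain ⟨hfT, hfsep⟩ := mem_cutEdges.1 hf
  rw [hε f hfT, dirT_ofBool_pos_iff] at hpos
  have hfE := (Finset.mem_sdiff.1 hfT).1
  have hhf : Robbins.head G.ends ε f ∉ Z := hpos ▸ (Finset.mem_sdiff.1 hv).2
  have htf : Robbins.tail G.ends ε f ∈ Z := by
    have := (Robbins.separates_iff_head_tail (ε := ε)).1 hfsep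
    simp only [Finset.mem_coe] at this
    tauto
  refine ⟨f, Finset.mem_sdiff.2 ⟨hfT, fun hfS => hhf ?_⟩, (hmemZ _ (tail_mem_V ε hfE)).1 htf⟩
  exact (hmemZ _ (head_mem_V ε hfE)).2 (((hmemZ _ (tail_mem_V ε hfE)).1 htf).trans _ _ _
    (.rel _ _ (adjOn_tail_head ε hfS hfE)))

/-- A union of components of `G − S` crossed by the cycle `c 0, …, c (n-1)` is entered and
left by it. -/
theorem totCyc_sdiff_of_cycle {S T : Finset ℕ} {O : Orient} {ε : ℕ → Bool}
    (hε : ∀ e ∈ G.E \ T, O e = Orient.ofBool ε e) (htcS : G.TotCyc S (restr O (G.E \ S)))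
    {c : ℕ → ℕ} {n : ℕ} (hc : ∀ m < n, c m ∈ (G.E \ T) \ (G.E \ S))
    (hlink : ∀ m < n, Relation.EqvGen (G.adjOn (G.E \ S)) (Robbins.head G.ends ε (c m))
      (Robbins.tail G.ends ε (c (m + 1))))
    (hclose : Relation.EqvGen (G.adjOn (G.E \ S)) (Robbins.tail G.ends ε (c n))
      (Robbins.tail G.ends ε (c 0))) :
    G.TotCyc (S \ (Finset.range n).image c)
      (restr O (G.E \ (S \ (Finset.range n).image c))) := by
  set C := (Finset.range n).image c
  have hsub : G.E \ S ⊆ G.E \ (S \ C) := sdiff_subset_sdiff_E Finset.sdiff_subset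
  have hcE : ∀ m < n, c m ∈ G.E \ (S \ C) := fun m hm => by
    have hC : c m ∈ C := Finset.mem_image_of_mem c (Finset.mem_range.2 hm)
    simp only [Finset.mem_sdiff, hC, not_true_eq_false, and_false, not_false_eq_true, and_true]
    exact (Finset.mem_sdiff.1 (Finset.mem_sdiff.1 (hc m hm)).1).1
  refine htcS.extend Finset.sdiff_subset
    (fun e he => by rw [restr_apply_of_mem (hsub he), restr_apply_of_mem he])
    fun Z _ hS hcut => ?_
  have hhead : ∀ m < n, Robbins.head G.ends ε (c m) ∈ Z ↔ Robbins.tail G.ends ε (c (m + 1)) ∈ Z :=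
    fun m hm => mem_iff_of_cutEdges_eq_empty hS (hlink m hm)
  have hedge : ∀ m < n, ¬ (Robbins.head G.ends ε (c m) ∈ Z ↔ Robbins.tail G.ends ε (c m) ∈ Z) →
      c m ∈ G.cutEdges (S \ C) Z ∧
        0 < dirT (restr O (G.E \ (S \ C)) (c m)) (G.ends (c m)) (Robbins.head G.ends ε (c m)) :=
    fun m hm h => ⟨mem_cutEdges.2 ⟨hcE m hm, (Robbins.separates_iff_head_tail (ε := ε)).2 h⟩, by
      rw [restr_apply_of_mem (hcE m hm), hε _ (Finset.mem_sdiff.1 (hc m hm)).1,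
        dirT_ofBool_pos_iff]⟩
  have hchange : ∃ m < n, ¬ (Robbins.tail G.ends ε (c m) ∈ Z ↔
      Robbins.tail G.ends ε (c (m + 1)) ∈ Z) := by
    obtain ⟨f, hf⟩ := hcut
    obtain ⟨hfSC, hfsep⟩ := mem_cutEdges.1 hf
    have hfS : f ∉ G.E \ S := fun h => by simpa [hS] using mem_cutEdges.2 ⟨h, hfsep⟩
    have hfC : f ∈ C := by
      simp only [Finset.mem_sdiff, not_and, not_not] at hfSC hfS
      exact hfSC.2 (hfS hfSC.1)
    obtain ⟨m, hm, rfl⟩ := Finset.mem_image.1 hfC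
    have hm := Finset.mem_range.1 hm
    refine ⟨m, hm, fun h => (Robbins.separates_iff_head_tail (ε := ε)).1 hfsep ?_⟩
    simp only [Finset.mem_coe, hhead m hm, h]
  obtain ⟨⟨l, hl, hl1, hl2⟩, ⟨l', hl', hl'1, hl'2⟩⟩ :=
    exists_switches_of_cyclic (u := fun m => Robbins.tail G.ends ε (c m) ∈ Z)
      (mem_iff_of_cutEdges_eq_empty hS hclose) hchange
  have hlE : c l ∈ G.E := (Finset.mem_sdiff.1 (hcE l hl)).1
  refine ⟨⟨c l', (hedge l' hl' ?_).1, _, (hhead l' hl').2 hl'2, (hedge l' hl' ?_).2⟩,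
    ⟨c l, (hedge l hl ?_).1, _, Finset.mem_sdiff.2 ⟨head_mem_V ε hlE,
      fun h => hl2 ((hhead l hl).1 h)⟩, (hedge l hl ?_).2⟩⟩ <;>
  simp only [hhead l' hl', hhead l hl, hl1, hl2, hl'1, hl'2, iff_true, iff_false, not_false_eq_true,
    not_true_eq_false]

/-- The cycle joins `n` distinct components of `G − S`. -/
theorem ncomp_sdiff_add_card_le_of_cycle {S : Finset ℕ} {ε : ℕ → Bool} {c : ℕ → ℕ} {n : ℕ}
    (hc : ∀ m < n, c m ∈ G.E)
    (hlink : ∀ m < n, Relation.EqvGen (G.adjOn (G.E \ S)) (Robbins.head G.ends ε (c m))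
      (Robbins.tail G.ends ε (c (m + 1))))
    (hinj : ∀ m < n, ∀ m' < n, Relation.EqvGen (G.adjOn (G.E \ S)) (Robbins.tail G.ends ε (c m))
      (Robbins.tail G.ends ε (c m')) → m = m') :
    G.ncomp G.V (G.E \ (S \ (Finset.range n).image c)) + ((Finset.range n).image c).card ≤
      G.ncomp G.V (G.E \ S) + 1 := by
  set C := (Finset.range n).image c
  set s := (Finset.range n).image fun m => Robbins.tail G.ends ε (c m)
  have hsub : G.E \ S ⊆ G.E \ (S \ C) := sdiff_subset_sdiff_E Finset.sdiff_subset
  have hcard : C.card = s.card := by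
    rw [Finset.card_image_of_injOn, Finset.card_image_of_injOn]
    · intro m hm m' hm' h
      exact hinj m (Finset.mem_range.1 hm) m' (Finset.mem_range.1 hm')
        (by simp only at h; rw [h]; exact .refl _)
    · intro m hm m' hm' h
      exact hinj m (Finset.mem_range.1 hm) m' (Finset.mem_range.1 hm') (by rw [h]; exact .refl _)
  have hlinked : ∀ m < n, Relation.EqvGen (G.adjOn (G.E \ (S \ C)))
      (Robbins.tail G.ends ε (c 0)) (Robbins.tail G.ends ε (c m)) := by
    intro m hm
    induction m with
    | zero => exact .refl _
    | succ m ih =>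
      have hcm : c m ∈ G.E \ (S \ C) := Finset.mem_sdiff.2 ⟨hc m (by omega), fun h =>
        (Finset.mem_sdiff.1 h).2 (Finset.mem_image_of_mem c (Finset.mem_range.2 (by omega)))⟩
      exact (ih (by omega)).trans _ _ _ ((Relation.EqvGen.rel _ _
        (adjOn_tail_head ε hcm (hc m (by omega)))).trans _ _ _
        (Relation.EqvGen.mono (fun _ _ => adjOn_mono hsub) _ _ (hlink m (by omega))))
  rw [hcard]
  refine ncomp_add_card_le hsub (fun x hx => ?_) (fun x hx y hy hxy h => ?_) fun x hx y hy => ?_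
  · obtain ⟨m, hm, rfl⟩ := Finset.mem_image.1 hx
    exact tail_mem_V ε (hc m (Finset.mem_range.1 hm))
  · obtain ⟨m, hm, rfl⟩ := Finset.mem_image.1 hx
    obtain ⟨m', hm', rfl⟩ := Finset.mem_image.1 hy
    exact hxy (by rw [hinj m (Finset.mem_range.1 hm) m' (Finset.mem_range.1 hm') h])
  · obtain ⟨m, hm, rfl⟩ := Finset.mem_image.1 hx
    obtain ⟨m', hm', rfl⟩ := Finset.mem_image.1 hy
    exact (hlinked m (Finset.mem_range.1 hm)).symm.trans _ _ _
      (hlinked m' (Finset.mem_range.1 hm'))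

/-- Following new edges from component to component of `G − S` eventually closes a cycle. -/
theorem exists_totCyc_sdiff {S T : Finset ℕ} {O : Orient} {ε : ℕ → Bool}
    (hε : ∀ e ∈ G.E \ T, O e = Orient.ofBool ε e) (htc : G.TotCyc T O)
    (htcS : G.TotCyc S (restr O (G.E \ S))) (hN : ((G.E \ T) \ (G.E \ S)).Nonempty) :
    ∃ C ⊆ (G.E \ T) \ (G.E \ S), C.Nonempty ∧ G.TotCyc (S \ C) (restr O (G.E \ (S \ C))) ∧
      G.ncomp G.V (G.E \ (S \ C)) + C.card ≤ G.ncomp G.V (G.E \ S) + 1 := by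
  set N := (G.E \ T) \ (G.E \ S)
  choose! next hnext hlinkn using fun e (he : e ∈ N) => exists_next_edge hε htc he
  obtain ⟨e₀, he₀⟩ := hN
  set seq : ℕ → ℕ := fun k => next^[k] e₀
  have hseq : ∀ k, seq k ∈ N := fun k => by
    induction k with
    | zero => exact he₀
    | succ k ih =>
      simp only [seq, Function.iterate_succ_apply']
      exact hnext _ ih
  have hseqE : ∀ k, seq k ∈ G.E := fun k => (Finset.mem_sdiff.1 (Finset.mem_sdiff.1 (hseq k)).1).1
  have hlink : ∀ k, Relation.EqvGen (G.adjOn (G.E \ S)) (Robbins.head G.ends ε (seq k))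
      (Robbins.tail G.ends ε (seq (k + 1))) := fun k => by
    simp only [seq, Function.iterate_succ_apply']
    exact hlinkn _ (hseq k)
  obtain ⟨i, n, hn, hret, hinj⟩ :=
    exists_first_return (φ := fun k => G.compRep S (Robbins.tail G.ends ε (seq k)))
      (s := G.V.image (G.compRep S)) fun k => Finset.mem_image_of_mem _ (tail_mem_V ε (hseqE k))
  refine ⟨(Finset.range n).image fun m => seq (i + m),
    Finset.image_subset_iff.2 fun m _ => hseq _,
    ⟨seq (i + 0), Finset.mem_image_of_mem _ (Finset.mem_range.2 hn)⟩,
    totCyc_sdiff_of_cycle hε htcS (fun m _ => hseq _) (fun m _ => hlink _)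
      (compRep_eq_iff.1 hret),
    ncomp_sdiff_add_card_le_of_cycle (fun m _ => hseqE _) (fun m _ => hlink _)
      fun m hm m' hm' h => hinj m hm m' hm' (compRep_eq_iff.2 h)⟩

theorem TotCyc.not_isBridge {R : Finset ℕ} {O : Orient} (hbi : G.biE O = ∅)
    (h : G.TotCyc R O) (f : ℕ) : ¬ G.IsBridge R f := by
  intro hf
  obtain ⟨Z, hZV, hZne, hZV', hcut⟩ := exists_cutEdges_eq_singleton hf
  obtain ⟨⟨e₁, he₁, v₁, hv₁, h₁⟩, ⟨e₂, he₂, v₂, hv₂, h₂⟩⟩ :=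
    h Z hZV hZne hZV' (hcut ▸ Finset.singleton_nonempty f)
  rw [hcut, Finset.mem_singleton] at he₁ he₂
  rw [he₁] at h₁
  rw [he₂] at h₂
  have hbif : O f ≠ some EdgeDir.bi := fun h' => by
    simpa [hbi] using mem_biE.2 ⟨(Finset.mem_sdiff.1 hf.1).1, h'⟩
  exact (Finset.mem_sdiff.1 hv₂).2 (eq_of_dirT_pos hbif h₁ h₂ ▸ hv₁)

theorem exists_eq_ofBool {T : Finset ℕ} {O : Orient} (hO : G.IsOrientOn T O)
    (hbi : G.biE O = ∅) : ∃ ε, ∀ e ∈ G.E \ T, O e = Orient.ofBool ε e := by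
  refine ⟨fun e => decide (O e = some EdgeDir.fwd), fun e he => ?_⟩
  have h1 := (hO e).2 he
  have h2 : O e ≠ some EdgeDir.bi := fun h => by
    simpa [hbi] using mem_biE.2 ⟨(Finset.mem_sdiff.1 he).1, h⟩
  unfold Orient.ofBool
  rcases hOe : O e with _ | _ | _ | _ <;> simp_all

theorem memOb_one_restr {T R : Finset ℕ} {O : Orient} {e₀ : ℕ} (hO : G.IsOrientOn T O)
    (hbi : G.biE O = {e₀}) (hTR : T ⊆ R) (he₀ : e₀ ∉ R)
    (hrt : G.RootedAt R (restr O (G.E \ R)) e₀) : G.MemOb R 1 (restr O (G.E \ R)) := by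
  have he₀E : e₀ ∈ G.E := (mem_biE.1 (hbi ▸ Finset.mem_singleton_self e₀)).1
  refine memOb_one_iff.2 ⟨hO.restr hTR, Or.inl ⟨e₀, ?_, hrt⟩⟩
  rw [biE_restr, hbi, Finset.singleton_inter_of_mem (Finset.mem_sdiff.2 ⟨he₀E, he₀⟩)]

theorem exists_memOb_one_erase {S T : Finset ℕ} {O : Orient} (hSE : S ⊆ G.E) (hTS : T ⊆ S)
    (hne : (S \ T).Nonempty) (hOT : G.MemOb T 1 O) (hOS : G.MemOb S 1 (restr O (G.E \ S))) :
    ∃ e ∈ S \ T, G.MemOb (S.erase e) 1 (restr O (G.E \ S.erase e)) := by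
  obtain ⟨hO, hrT⟩ := memOb_one_iff.1 hOT
  obtain ⟨e', he'⟩ := hne
  have he'T : e' ∈ G.E \ T := Finset.mem_sdiff.2 ⟨hSE (Finset.mem_sdiff.1 he').1,
    (Finset.mem_sdiff.1 he').2⟩
  obtain ⟨e₀, hbi, -⟩ := hrT.resolve_right fun h => by simp [h.1] at he'T
  have he₀T : e₀ ∈ G.E \ T := hO.mem_of_mem_biE (hbi ▸ Finset.mem_singleton_self e₀)
  have hTerase : ∀ e ∈ S \ T, T ⊆ S.erase e := fun e he x hx =>
    Finset.mem_erase.2 ⟨fun h => (Finset.mem_sdiff.1 he).2 (h ▸ hx), hTS hx⟩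
  rcases (memOb_one_iff.1 hOS).2 with ⟨e₁, hbi₁, hrt₁⟩ | ⟨hES, hV⟩
  · have he₁ : e₁ ∈ G.biE O ∩ (G.E \ S) := by
      rw [← biE_restr, hbi₁]
      exact Finset.mem_singleton_self e₁
    rw [hbi, Finset.mem_inter, Finset.mem_singleton] at he₁
    obtain ⟨rfl, he₁S⟩ := he₁
    refine ⟨e', he', memOb_one_restr hO hbi (hTerase e' he')
      (fun h => (Finset.mem_sdiff.1 he₁S).2 (Finset.mem_of_mem_erase h)) ?_⟩
    refine hrt₁.extend (Finset.erase_subset _ _) (fun e he => ?_) he₁S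
    rw [restr_apply_of_mem he, restr_apply_of_mem
      (sdiff_subset_sdiff_E (Finset.erase_subset _ _) he)]
  · have he₀S : e₀ ∈ S \ T := by
      refine Finset.mem_sdiff.2 ⟨?_, (Finset.mem_sdiff.1 he₀T).2⟩
      by_contra h
      simpa [hES] using Finset.mem_sdiff.2 ⟨(Finset.mem_sdiff.1 he₀T).1, h⟩
    exact ⟨e₀, he₀S, memOb_one_restr hO hbi (hTerase e₀ he₀S) (Finset.notMem_erase e₀ S)
      (rootedAt_of_card_V_eq_one hV _ _ _)⟩

theorem exists_POb_sdiff {b : ℕ} (hb : b = 0 ∨ b = 1) {S T : Finset ℕ} {O : Orient}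
    (hS : G.Ab b S) (hTS : T ⊆ S) (hne : (S \ T).Nonempty) (hOT : G.MemOb T b O)
    (hOS : G.MemOb S b (restr O (G.E \ S))) :
    ∃ C ⊆ S \ T, C.Nonempty ∧ G.POb b (S \ C, restr O (G.E \ (S \ C))) ∧
      G.ncomp G.V (G.E \ (S \ C)) + C.card ≤ G.ncomp G.V (G.E \ S) + 1 := by
  have hSE := hS.1
  rcases hb with rfl | rfl
  · obtain ⟨hO, hbi, htc⟩ := memOb_zero_iff.1 hOT
    obtain ⟨-, -, htcS⟩ := memOb_zero_iff.1 hOS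
    obtain ⟨ε, hε⟩ := exists_eq_ofBool hO hbi
    have hN : (G.E \ T) \ (G.E \ S) = S \ T := by
      ext x
      simp only [Finset.mem_sdiff, not_and, not_not]
      exact ⟨fun ⟨⟨_, hxT⟩, hxS⟩ => ⟨hxS ‹_›, hxT⟩,
        fun ⟨hxS, hxT⟩ => ⟨⟨hSE hxS, hxT⟩, fun _ => hxS⟩⟩
    obtain ⟨C, hC, hCne, htcC, hcount⟩ := exists_totCyc_sdiff hε htc htcS (hN ▸ hne)
    rw [hN] at hC
    have hTC : T ⊆ S \ C := fun x hx =>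
      Finset.mem_sdiff.2 ⟨hTS hx, fun h => (Finset.mem_sdiff.1 (hC h)).2 hx⟩
    have hbiC : G.biE (restr O (G.E \ (S \ C))) = ∅ := by rw [biE_restr, hbi, Finset.empty_inter]
    exact ⟨C, hC, hCne, ⟨ab_zero_iff.2 ⟨Finset.sdiff_subset.trans hSE, htcC.not_isBridge hbiC⟩,
      memOb_zero_iff.2 ⟨hO.restr hTC, hbiC, htcC⟩⟩, hcount⟩
  · obtain ⟨e, he, hmem⟩ := exists_memOb_one_erase hSE hTS hne hOT hOS
    have hconn := (ab_one_iff.1 hS).2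
    have hconn' : G.ConnSub G.V (G.E \ S.erase e) :=
      hconn.mono (sdiff_subset_sdiff_E (Finset.erase_subset e S))
    rw [← Finset.sdiff_singleton_eq_erase] at hmem hconn'
    refine ⟨{e}, Finset.singleton_subset_iff.2 he, Finset.singleton_nonempty e,
      ⟨ab_one_iff.2 ⟨Finset.sdiff_subset.trans hSE, hconn'⟩, hmem⟩, ?_⟩
    rw [hconn', hconn, Finset.card_singleton]

theorem ncomp_add_one_le {b : ℕ} (hb : b = 0 ∨ b = 1) {S T : Finset ℕ} (hS : G.Ab b S)
    (hT : G.Ab b T) (hTS : T ⊆ S) (hne : (S \ T).Nonempty) :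
    G.ncomp G.V (G.E \ S) + 1 ≤ (S \ T).card + G.ncomp G.V (G.E \ T) := by
  rcases hb with rfl | rfl
  · obtain ⟨e, he⟩ := hne
    have heT : e ∈ G.E \ T := Finset.mem_sdiff.2 ⟨hS.1 (Finset.mem_sdiff.1 he).1,
      (Finset.mem_sdiff.1 he).2⟩
    have hnb : G.ncomp G.V (G.E \ insert e T) ≤ G.ncomp G.V (G.E \ T) :=
      not_lt.1 fun h => (ab_zero_iff.1 hT).2 e ⟨heT, h⟩
    have hdecomp : G.E \ S = (G.E \ insert e T) \ ((S \ T).erase e) := by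
      ext x
      simp only [Finset.mem_sdiff, Finset.mem_insert, Finset.mem_erase]
      by_cases hx : x = e
      · subst hx
        simp [(Finset.mem_sdiff.1 he).1]
      · have := @hTS x
        tauto
    have h := G.ncomp_sdiff_le (G.E \ insert e T) ((S \ T).erase e)
    rw [← hdecomp, Finset.card_erase_of_mem he] at h
    have := Finset.card_pos.2 ⟨e, he⟩
    omega
  · rw [(ab_one_iff.1 hS).2, (ab_one_iff.1 hT).2]
    have := Finset.card_pos.2 hne
    omega

variable (G) in
theorem subGenus_V_sdiff (X : Finset ℕ) : G.subGenus G.V (G.E \ X) =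
    (∑ v ∈ G.V, (G.w v : ℤ)) - G.V.card + (G.E \ X).card + G.ncomp G.V (G.E \ X) := by
  rw [subGenus, Finset.inter_eq_left.2 Finset.sdiff_subset]

theorem card_E_sdiff_eq {S T : Finset ℕ} (hSE : S ⊆ G.E) (hTS : T ⊆ S) :
    (G.E \ T).card = (G.E \ S).card + (S \ T).card := by
  rw [← Finset.card_union_of_disjoint (Finset.disjoint_left.2 fun x hx hx' =>
    (Finset.mem_sdiff.1 hx).2 (Finset.mem_sdiff.1 hx').1)]
  congr 1
  ext x
  simp only [Finset.mem_sdiff, Finset.mem_union]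
  have := @hSE x
  have := @hTS x
  tauto

/-- At a covering relation `(S, O̅_S) ⋖ (T, O̅_T)`, the element of `exists_POb_sdiff` must be
`(T, O̅_T)` itself, which pins the number of components of `G − T`. -/
theorem isRankOnMod_subGenus {b : ℕ} (hb : b = 0 ∨ b = 1) :
    IsRankOnMod (G.POb b) (G.eqOP b) (G.leOPbar b)
      (fun p => (G.subGenus G.V (G.E \ p.1)).toNat) := by
  rintro ⟨S, OS⟩ ⟨T, OT⟩ ⟨hP, hP', hle, hne, hcov⟩
  obtain ⟨hTS, O, hOT, hOS⟩ := hle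
  dsimp only at *
  have hST : (S \ T).Nonempty := Finset.sdiff_nonempty.2 fun h =>
    hne (eqOP_of_leOPbar ⟨hTS, O, hOT, hOS⟩ (Finset.Subset.antisymm h hTS))
  obtain ⟨C, hC, hCne, hPC, hcount⟩ := exists_POb_sdiff hb hP.1 hTS hST
    (memOb_of_equivOr hOT.symm hP'.2) (memOb_of_equivOr hOS.symm hP.2)
  dsimp only at hcount
  have hTC : T ⊆ S \ C := fun x hx =>
    Finset.mem_sdiff.2 ⟨hTS hx, fun h => (Finset.mem_sdiff.1 (hC h)).2 hx⟩
  have hle₁ : G.leOPbar b (S, OS) (S \ C, restr O (G.E \ (S \ C))) :=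
    ⟨Finset.sdiff_subset, _, equivOr_refl hPC.2.1,
      by rwa [restr_restr (sdiff_subset_sdiff_E Finset.sdiff_subset)]⟩
  have hle₂ : G.leOPbar b (S \ C, restr O (G.E \ (S \ C))) (T, OT) :=
    ⟨hTC, O, hOT, equivOr_refl hPC.2.1⟩
  have hCT : S \ C = T := by
    rcases hcov _ hPC hle₁ hle₂ with h | h
    · obtain ⟨c, hc⟩ := hCne
      exact absurd (h.1 ▸ (Finset.mem_sdiff.1 (hC hc)).1) fun h' => (Finset.mem_sdiff.1 h').2 hc
    · exact h.1
  have hCcard : C.card = (S \ T).card := by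
    rw [← hCT, Finset.sdiff_sdiff_eq_self (hC.trans Finset.sdiff_subset)]
  rw [hCT, hCcard] at hcount
  have hcomp : G.ncomp G.V (G.E \ S) + 1 = (S \ T).card + G.ncomp G.V (G.E \ T) :=
    le_antisymm (ncomp_add_one_le hb hP.1 hP'.1 hTS hST) (by omega)
  have hnn := G.subGenus_nonneg (G.E \ S)
  rw [G.subGenus_V_sdiff] at hnn
  rw [G.subGenus_V_sdiff, G.subGenus_V_sdiff, card_E_sdiff_eq (S := S) hP.1.1 hTS]
  omega

end MGraph

theorem OPbar_poset_general (G : MGraph) (b : ℕ) (hb : b = 0 ∨ b = 1) :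
    (∀ S T, G.Ab b S → G.Ab b T → T ⊆ S →
      ∀ OS OT, G.MemOb S b OS → G.MemOb T b OT →
        ((∃ OS' OT', G.equivOr S b OS' OS ∧ G.equivOr T b OT' OT ∧
            restr OT' (G.E \ S) = OS') ↔
         (∀ OS', G.equivOr S b OS' OS →
            ∃ OT', G.equivOr T b OT' OT ∧ restr OT' (G.E \ S) = OS'))) ∧
    IsPartialOrderOnMod (G.POb b) (G.eqOP b) (G.leOPbar b) ∧
    IsPosetQuotient (G.POb b) (G.Ab b) (G.leOPbar b)
      (fun S S' => S' ⊆ S) Prod.fst ∧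
    IsRankOnMod (G.POb b) (G.eqOP b) (G.leOPbar b)
      (fun p => (G.subGenus G.V (G.E \ p.1)).toNat) := by
  refine ⟨fun _ _ _ _ hTS _ _ hOS _ => MGraph.exists_restr_iff_forall_restr hTS hOS.1,
    MGraph.isPartialOrderOnMod_leOPbar b, MGraph.isPosetQuotient_fst hb,
    MGraph.isRankOnMod_subGenus hb⟩

/-- For `b = 0, 1` (with `G` connected if `b = 1`):
the two conditions (i) "some representatives restrict correctly" and
(ii) "every representative of the smaller class is a restriction of a
representative of the bigger class" are equivalent; the resulting relation
makes `𝒪̄𝒫^b_G` into a poset; the forgetful map to `A^b_G` is a quotient of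
posets; and `O̅_S ↦ g(G−S)` is a rank. -/
theorem OPbar_poset (G : MGraph) (b : ℕ) (hb : b = 0 ∨ b = 1)
    (hconn : b = 1 → G.Connected) :
    (∀ S T, G.Ab b S → G.Ab b T → T ⊆ S →
      ∀ OS OT, G.MemOb S b OS → G.MemOb T b OT →
        ((∃ OS' OT', G.equivOr S b OS' OS ∧ G.equivOr T b OT' OT ∧
            restr OT' (G.E \ S) = OS') ↔
         (∀ OS', G.equivOr S b OS' OS →
            ∃ OT', G.equivOr T b OT' OT ∧ restr OT' (G.E \ S) = OS'))) ∧
    IsPartialOrderOnMod (G.POb b) (G.eqOP b) (G.leOPbar b) ∧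
    IsPosetQuotient (G.POb b) (G.Ab b) (G.leOPbar b)
      (fun S S' => S' ⊆ S) Prod.fst ∧
    IsRankOnMod (G.POb b) (G.eqOP b) (G.leOPbar b)
      (fun p => (G.subGenus G.V (G.E \ p.1)).toNat) :=
  OPbar_poset_general G b hb
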